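/- arXiv:2207.08116 — 4 statements merged into one kernel-verified Lean document; each statement's English description precedes it below -/
import Mathlib

section
/- Let n be a positive integer. For every tree T on the vertex set {1,…,n+1} together with a bijection ℓ from {1,…,n} onto the edge set of T, there exists a unique extremal array A in S(n, n+1) such that for all i ∈ {1,…,n} and j ∈ {1,…,n+1}: A(i,j) ≠ 0 if and only if the vertex j is an endpoint of the edge ℓ(i). Moreover, the map sending the pair (T, ℓ) to this array A is a bijection from the set of all such pairs onto the set of extremal arrays in S(n, n+1). -/
/-- An `n × m` real matrix is a *doubly stochastic array* if its entries are
nonnegative, each column sums to `n` and each row sums to `m`. -/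
def IsDSA (n m : ℕ) (A : Matrix (Fin n) (Fin m) ℝ) : Prop :=
  (∀ i j, 0 ≤ A i j) ∧ (∀ j, ∑ i, A i j = (n : ℝ)) ∧ (∀ i, ∑ j, A i j = (m : ℝ))

/-- An array `A ∈ S(n,m)` is *extremal* if it cannot be written as a convex
combination of two doubly stochastic arrays both different from `A`. -/
def IsExtremal (n m : ℕ) (A : Matrix (Fin n) (Fin m) ℝ) : Prop :=
  IsDSA n m A ∧ ∀ (B C : Matrix (Fin n) (Fin m) ℝ) (t : ℝ),
    IsDSA n m B → IsDSA n m C → 0 < t → t < 1 →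
    A = t • B + (1 - t) • C → B = A ∨ C = A

/-- The support of a matrix: the set of positions of its nonzero entries. -/
def matSupp (n m : ℕ) (A : Matrix (Fin n) (Fin m) ℝ) : Set (Fin n × Fin m) :=
  {p | A p.1 p.2 ≠ 0}

/-- The size of the support of a matrix. -/
noncomputable def suppCard (n m : ℕ) (A : Matrix (Fin n) (Fin m) ℝ) : ℕ :=
  (matSupp n m A).ncard

/-- A subset `Ω` of positions contains a *cycle* if there are `s ≥ 2`, distinct row
indices `i₁,…,i_s` and distinct column indices `j₁,…,j_s` such that all the pairs
`(i₁,j₁), (i₂,j₁), (i₂,j₂), (i₃,j₂), …, (i_s,j_s), (i₁,j_s)` belong to `Ω`. -/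
def ContainsCycle (n m : ℕ) (Ω : Set (Fin n × Fin m)) : Prop :=
  ∃ s : ℕ, 2 ≤ s ∧ ∃ (i : ZMod s → Fin n) (j : ZMod s → Fin m),
    Function.Injective i ∧ Function.Injective j ∧
    ∀ t : ZMod s, (i t, j t) ∈ Ω ∧ (i (t + 1), j t) ∈ Ω

/-- Two matrices are *equivalent* if one is obtained from the other by a
permutation of rows and a permutation of columns. -/
def MatEquiv (n m : ℕ) (A B : Matrix (Fin n) (Fin m) ℝ) : Prop :=
  ∃ (σ : Equiv.Perm (Fin n)) (τ : Equiv.Perm (Fin m)), ∀ i j, B i j = A (σ i) (τ j)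

open Finset

/-- key: extremal arrays kill any perturbation supported on their support with zero margins -/
lemma extremal_kernel {n m : ℕ} {A : Matrix (Fin n) (Fin m) ℝ} (hA : IsExtremal n m A)
    (D : Matrix (Fin n) (Fin m) ℝ) (h1 : ∀ i, ∑ j, D i j = 0) (h2 : ∀ j, ∑ i, D i j = 0)
    (hs : ∀ i j, A i j = 0 → D i j = 0) : D = 0 := by
  classical
  by_contra hD
  have hex : ∃ p : Fin n × Fin m, D p.1 p.2 ≠ 0 := by
    by_contra h
    push_neg at h
    exact hD (by ext i j; exact h (i, j))
  obtain ⟨p0, hp0⟩ := hex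
  have hA0 : A p0.1 p0.2 ≠ 0 := fun h => hp0 (hs _ _ h)
  set S : Finset (Fin n × Fin m) := univ.filter (fun p => A p.1 p.2 ≠ 0) with hS
  have hSne : S.Nonempty := ⟨p0, by simp [hS, hA0]⟩
  set α : ℝ := S.inf' hSne (fun p => A p.1 p.2) with hα
  have hαpos : 0 < α := by
    rw [hα, Finset.lt_inf'_iff]
    intro p hp
    simp only [hS, mem_filter] at hp
    exact lt_of_le_of_ne (hA.1.1 p.1 p.2) (Ne.symm hp.2)
  set β : ℝ := (univ : Finset (Fin n × Fin m)).sup' ⟨p0, mem_univ _⟩ (fun p => |D p.1 p.2|) with hβ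
  have hβpos : 0 < β := by
    have := Finset.le_sup' (fun p : Fin n × Fin m => |D p.1 p.2|) (mem_univ p0)
    have h0 : 0 < |D p0.1 p0.2| := abs_pos.mpr hp0
    linarith
  set ε : ℝ := α / β with hε
  have hεpos : 0 < ε := div_pos hαpos hβpos
  have hbound : ∀ i j, |ε * D i j| ≤ A i j ∨ D i j = 0 := by
    intro i j
    by_cases h : A i j = 0
    · exact Or.inr (hs i j h)
    · left
      have hmem : (i, j) ∈ S := by simp [hS, h]
      have h1' : α ≤ A i j := Finset.inf'_le _ hmem
      have h2' : |D i j| ≤ β := Finset.le_sup' (fun p : Fin n × Fin m => |D p.1 p.2|) (mem_univ (i, j))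
      calc |ε * D i j| = ε * |D i j| := by rw [abs_mul, abs_of_pos hεpos]
        _ ≤ ε * β := by nlinarith
        _ = α := by rw [hε, div_mul_cancel₀ α (ne_of_gt hβpos)]
        _ ≤ A i j := h1'
  set B := A + ε • D with hB
  set C := A - ε • D with hC
  have hDSA : ∀ s : ℝ, (∀ i j, |s * D i j| ≤ A i j ∨ D i j = 0) → IsDSA n m (A + s • D) := by
    intro s hb
    refine ⟨fun i j => ?_, fun j => ?_, fun i => ?_⟩
    · rcases hb i j with h | h
      · have := abs_le.mp h
        simp only [Matrix.add_apply, Matrix.smul_apply, smul_eq_mul]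
        linarith [this.1]
      · simp [Matrix.add_apply, h, hA.1.1 i j]
    · rw [Finset.sum_congr rfl (fun i _ => Matrix.add_apply A (s • D) i j), Finset.sum_add_distrib, hA.1.2.1 j]
      simp only [Matrix.smul_apply, smul_eq_mul, ← Finset.mul_sum, h2 j, mul_zero, add_zero]
    · rw [Finset.sum_congr rfl (fun j _ => Matrix.add_apply A (s • D) i j), Finset.sum_add_distrib, hA.1.2.2 i]
      simp only [Matrix.smul_apply, smul_eq_mul, ← Finset.mul_sum, h1 i, mul_zero, add_zero]
  have hBdsa : IsDSA n m B := hDSA ε hbound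
  have hCdsa : IsDSA n m C := by
    have hb' : ∀ i j, |(-ε) * D i j| ≤ A i j ∨ D i j = 0 := by
      intro i j
      rcases hbound i j with h | h
      · left; rwa [neg_mul, abs_neg]
      · exact Or.inr h
    have := hDSA (-ε) hb'
    convert this using 2
    ext i j
    simp [hC]
    ring
  have hcomb : A = (1/2 : ℝ) • B + (1 - 1/2 : ℝ) • C := by
    ext i j
    simp [hB, hC, Matrix.add_apply, Matrix.sub_apply, Matrix.smul_apply]
    ring
  rcases hA.2 B C (1/2) hBdsa hCdsa (by norm_num) (by norm_num) hcomb with h | h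
  · have := congrFun (congrFun h p0.1) p0.2
    simp [hB, Matrix.add_apply] at this
    rcases this with h' | h' 
    · exact absurd h' (ne_of_gt hεpos)
    · exact hp0 h'
  · have := congrFun (congrFun h p0.1) p0.2
    simp [hC, Matrix.sub_apply, sub_eq_self] at this
    rcases this with h' | h'
    · exact absurd h' (ne_of_gt hεpos)
    · exact hp0 h'

lemma extremal_of_kernel {n m : ℕ} {A : Matrix (Fin n) (Fin m) ℝ} (hA : IsDSA n m A)
    (hker : ∀ D : Matrix (Fin n) (Fin m) ℝ, (∀ i, ∑ j, D i j = 0) → (∀ j, ∑ i, D i j = 0) →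
      (∀ i j, A i j = 0 → D i j = 0) → D = 0) : IsExtremal n m A := by
  refine ⟨hA, fun B C t hB hC ht ht1 heq => ?_⟩
  have hBC : B = C := by
    have h0 : B - C = 0 := by
      apply hker
      · intro i; simp [Matrix.sub_apply, Finset.sum_sub_distrib, hB.2.2 i, hC.2.2 i]
      · intro j; simp [Matrix.sub_apply, Finset.sum_sub_distrib, hB.2.1 j, hC.2.1 j]
      · intro i j hAij
        have h := congrFun (congrFun heq i) j
        simp only [Matrix.add_apply, Matrix.smul_apply, smul_eq_mul, hAij] at h
        have hBij : B i j = 0 := by nlinarith [hB.1 i j, hC.1 i j, mul_nonneg (le_of_lt ht) (hB.1 i j), mul_nonneg (by linarith : (0:ℝ) ≤ 1 - t) (hC.1 i j)]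
        have hCij : C i j = 0 := by nlinarith [hB.1 i j, hC.1 i j]
        simp [Matrix.sub_apply, hBij, hCij]
    have := sub_eq_zero.mp h0
    exact this
  left
  rw [heq, hBC]
  ext i j
  simp [Matrix.add_apply]
  ring

/-- In S(n, n+1) every row of a DSA has at least two nonzero entries. -/
lemma row_two {n : ℕ} {A : Matrix (Fin n) (Fin (n+1)) ℝ} (hA : IsDSA n (n+1) A) (i : Fin n) :
    ∃ a b : Fin (n+1), a ≠ b ∧ A i a ≠ 0 ∧ A i b ≠ 0 := by
  classical
  have hrow := hA.2.2 i
  have hex : ∃ a, A i a ≠ 0 := by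
    by_contra h
    push_neg at h
    rw [Finset.sum_congr rfl (fun j _ => h j)] at hrow
    simp at hrow
    have : (0:ℝ) < (n:ℝ) + 1 := by positivity
    rw [← hrow] at this
    simp at this
  obtain ⟨a, ha⟩ := hex
  by_contra h
  push_neg at h
  have hall : ∀ j, j ≠ a → A i j = 0 := fun j hj => h a j (Ne.symm hj) ha
  -- row sum is concentrated at a
  have hAa : A i a = (n+1 : ℝ) := by
    have : ∑ j, A i j = A i a := by
      rw [Finset.sum_eq_single a]
      · intro b _ hb; exact hall b hb
      · intro hb; exact absurd (Finset.mem_univ a) hb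
    rw [this] at hrow
    rw [hrow]; push_cast; ring
  have hcol := hA.2.1 a
  have hle : A i a ≤ ∑ k, A k a :=
    Finset.single_le_sum (fun k _ => hA.1 k a) (Finset.mem_univ i)
  rw [hcol, hAa] at hle
  push_cast at hle
  linarith

/-- Dimension bound: if the only zero-margin matrix supported inside `supp A` is `0`,
then `supp A` has at most `n + m - 1` elements. -/
lemma supp_card_le {n m : ℕ} (hn : 0 < n) {A : Matrix (Fin n) (Fin m) ℝ}
    (hker : ∀ D : Matrix (Fin n) (Fin m) ℝ, (∀ i, ∑ j, D i j = 0) → (∀ j, ∑ i, D i j = 0) →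
      (∀ i j, A i j = 0 → D i j = 0) → D = 0) :
    (Finset.univ.filter (fun p : Fin n × Fin m => A p.1 p.2 ≠ 0)).card + 1 ≤ n + m := by
  classical
  set Ω : Finset (Fin n × Fin m) := Finset.univ.filter (fun p => A p.1 p.2 ≠ 0) with hΩ
  -- the matrix associated to x : Ω → ℝ
  set Dm : (Ω → ℝ) → Matrix (Fin n) (Fin m) ℝ :=
    fun x i j => if h : (i, j) ∈ Ω then x ⟨(i, j), h⟩ else 0 with hDm
  set Ψ : (Ω → ℝ) →ₗ[ℝ] (Fin n → ℝ) × (Fin m → ℝ) :=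
    { toFun := fun x => (fun i => ∑ j, Dm x i j, fun j => ∑ i, Dm x i j)
      map_add' := by
        intro x y
        have hD : ∀ i j, Dm (x + y) i j = Dm x i j + Dm y i j := by
          intro i j; by_cases h : (i, j) ∈ Ω <;> simp [hDm, h]
        ext u <;> simp [hD, Finset.sum_add_distrib]
      map_smul' := by
        intro c x
        have hD : ∀ i j, Dm (c • x) i j = c * Dm x i j := by
          intro i j; by_cases h : (i, j) ∈ Ω <;> simp [hDm, h]
        ext u <;> simp [hD, Finset.mul_sum] } with hΨ
  have hinj : Function.Injective Ψ := by
    rw [injective_iff_map_eq_zero]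
    intro x hx
    have hD0 : Dm x = 0 := by
      apply hker
      · intro i; exact congrFun (congrArg Prod.fst hx) i
      · intro j; exact congrFun (congrArg Prod.snd hx) j
      · intro i j hAij
        have : (i, j) ∉ Ω := by simp [hΩ, hAij]
        simp [hDm, this]
    funext q
    have := congrFun (congrFun hD0 q.1.1) q.1.2
    have hq : (q.1.1, q.1.2) ∈ Ω := by rcases q with ⟨⟨a, b⟩, hab⟩; exact hab
    simpa [hDm, hq] using this
  -- the total-sum functional
  set φ : ((Fin n → ℝ) × (Fin m → ℝ)) →ₗ[ℝ] ℝ :=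
    { toFun := fun rc => (∑ i, rc.1 i) - ∑ j, rc.2 j
      map_add' := by intro x y; simp [Finset.sum_add_distrib]; ring
      map_smul' := by intro c x; simp [Finset.mul_sum, mul_sub] } with hφ
  have hrange : LinearMap.range Ψ ≤ LinearMap.ker φ := by
    rintro _ ⟨x, rfl⟩
    simp only [LinearMap.mem_ker, hφ, hΨ, LinearMap.coe_mk, AddHom.coe_mk]
    rw [sub_eq_zero, Finset.sum_comm]
  have hφsurj : Function.Surjective φ := by
    intro y
    refine ⟨(fun _ => y / n, fun _ => 0), ?_⟩
    simp [hφ, Finset.sum_const]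
    field_simp
  have hkerφ : Module.finrank ℝ (LinearMap.ker φ) + 1 = n + m := by
    have h1 : Module.finrank ℝ (LinearMap.range φ) = 1 := by
      rw [LinearMap.range_eq_top.mpr hφsurj]
      simpa using Module.finrank_self ℝ
    have h2 := LinearMap.finrank_range_add_finrank_ker φ
    rw [h1] at h2
    have h3 : Module.finrank ℝ ((Fin n → ℝ) × (Fin m → ℝ)) = n + m := by
      simp [Module.finrank_prod]
    omega
  have hcard : Module.finrank ℝ (Ω → ℝ) = Ω.card := by
    simp [Module.finrank_pi]
  have hle : Module.finrank ℝ (Ω → ℝ) ≤ Module.finrank ℝ (LinearMap.ker φ) := by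
    rw [← LinearMap.finrank_range_of_inj hinj]
    exact Submodule.finrank_mono hrange
  omega

lemma extremal_rows_exactly_two {n : ℕ} (hn : 0 < n) {A : Matrix (Fin n) (Fin (n+1)) ℝ}
    (hA : IsExtremal n (n+1) A) :
    ∃ a b : Fin n → Fin (n+1), (∀ i, a i ≠ b i) ∧
      ∀ i j, A i j ≠ 0 ↔ (j = a i ∨ j = b i) := by
  classical
  have hker := fun D h1 h2 hs => extremal_kernel hA D h1 h2 hs
  have hbound := supp_card_le hn hker
  set cnt : Fin n → ℕ := fun i => (Finset.univ.filter (fun j => A i j ≠ 0)).card with hcnt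
  have hsum : ∑ i, cnt i = (Finset.univ.filter (fun p : Fin n × Fin (n+1) => A p.1 p.2 ≠ 0)).card := by
    rw [Finset.card_filter, Fintype.sum_prod_type]
    exact Finset.sum_congr rfl (fun i _ => Finset.card_filter _ _)
  have h2le : ∀ i, 2 ≤ cnt i := by
    intro i
    obtain ⟨x, y, hxy, hx, hy⟩ := row_two hA.1 i
    have : ({x, y} : Finset (Fin (n+1))) ⊆ Finset.univ.filter (fun j => A i j ≠ 0) := by
      intro z hz
      simp only [Finset.mem_insert, Finset.mem_singleton] at hz
      rcases hz with rfl | rfl <;> simp [hx, hy]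
    calc 2 = ({x, y} : Finset (Fin (n+1))).card := by rw [Finset.card_pair hxy]
      _ ≤ _ := Finset.card_le_card this
  have hcnt2 : ∀ i, cnt i = 2 := by
    by_contra h
    push_neg at h
    obtain ⟨i0, hi0⟩ := h
    have h3 : 2 < cnt i0 := lt_of_le_of_ne (h2le i0) (Ne.symm hi0)
    have : ∑ _i : Fin n, 2 < ∑ i, cnt i :=
      Finset.sum_lt_sum (fun i _ => h2le i) ⟨i0, Finset.mem_univ _, h3⟩
    have hconst : (∑ _i : Fin n, 2) = 2 * n := by
      simp [Finset.sum_const, Finset.card_univ, mul_comm]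
    rw [hconst, hsum] at this
    omega
  have hchoice : ∀ i, ∃ x y : Fin (n+1), x ≠ y ∧
      Finset.univ.filter (fun j => A i j ≠ 0) = {x, y} := by
    intro i
    exact Finset.card_eq_two.mp (hcnt2 i)
  choose a b hab hset using hchoice
  refine ⟨a, b, hab, fun i j => ?_⟩
  constructor
  · intro hne
    have : j ∈ Finset.univ.filter (fun k => A i k ≠ 0) := by simp [hne]
    rw [hset i] at this
    simpa using this
  · intro hj
    have : j ∈ ({a i, b i} : Finset (Fin (n+1))) := by simpa using hj
    rw [← hset i] at this
    simpa using this

lemma sym2_exists_rep {V : Type*} (e : Sym2 V) : ∃ x y : V, e = s(x, y) :=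
  Sym2.ind (fun x y => ⟨x, y, rfl⟩) e

/-- Values of a function constant along edges of a connected graph are constant. -/
lemma walk_const {V : Type*} {G : SimpleGraph V} {f : V → ℝ}
    (hf : ∀ u v : V, G.Adj u v → f u = f v) {u v : V} (w : G.Walk u v) : f u = f v := by
  induction w with
  | nil => rfl
  | cons h p ih => exact (hf _ _ h).trans ih

/-- The kernel lemma for tree supports: a matrix with zero margins supported on
the tree incidence pattern vanishes. -/
lemma tree_kernel {n : ℕ} {T : SimpleGraph (Fin (n+1))} (hT : T.IsTree)
    (ℓ : Fin n ≃ T.edgeSet) (D : Matrix (Fin n) (Fin (n+1)) ℝ)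
    (hrow : ∀ i, ∑ j, D i j = 0) (hcol : ∀ j, ∑ i, D i j = 0)
    (hsupp : ∀ i j, D i j ≠ 0 → j ∈ (ℓ i : Sym2 (Fin (n+1)))) : D = 0 := by
  classical
  have hrep : ∀ i : Fin n, ∃ x y : Fin (n+1), x ≠ y ∧ (ℓ i : Sym2 (Fin (n+1))) = s(x, y) := by
    intro i
    obtain ⟨x, y, hxy⟩ := sym2_exists_rep (ℓ i : Sym2 (Fin (n+1)))
    have hadj : T.Adj x y := T.mem_edgeSet.mp (hxy ▸ (ℓ i).2)
    exact ⟨x, y, hadj.ne, hxy⟩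
  choose a b hab he using hrep
  set c : Fin n → ℝ := fun i => D i (a i) with hc
  have hentry : ∀ i j, D i j = c i * ((if j = a i then 1 else 0) - (if j = b i then 1 else 0)) := by
    intro i j
    have hother : ∀ j', D i j' ≠ 0 → j' = a i ∨ j' = b i := by
      intro j' hj'
      have := hsupp i j' hj'
      rw [he i] at this
      exact Sym2.mem_iff.mp this
    have hrowi := hrow i
    have hsum2 : ∑ j', D i j' = D i (a i) + D i (b i) := by
      rw [← Finset.sum_pair (hab i)]
      apply (Finset.sum_subset (Finset.subset_univ _) _).symm
      intro x _ hx
      simp only [Finset.mem_insert, Finset.mem_singleton] at hx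
      push_neg at hx
      by_contra h0
      rcases hother x h0 with h | h
      · exact hx.1 h
      · exact hx.2 h
    have hbval : D i (b i) = -c i := by
      rw [hsum2] at hrowi; rw [hc]; linarith
    by_cases h1 : j = a i
    · subst h1
      simp [hc, (hab i)]
    · by_cases h2 : j = b i
      · subst h2
        simp [hbval, Ne.symm (hab i), h1]
      · have : D i j = 0 := by
          by_contra h0
          rcases hother j h0 with h | h
          · exact h1 h
          · exact h2 h
        simp [this, h1, h2]
  -- the incidence linear map
  set Φ : (Fin (n+1) → ℝ) →ₗ[ℝ] (Fin n → ℝ) :=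
    { toFun := fun f i => f (a i) - f (b i)
      map_add' := by intro x y; funext i; simp; ring
      map_smul' := by intro r x; funext i; simp; ring } with hΦ
  have hkerΦ : LinearMap.ker Φ ≤ Submodule.span ℝ {(fun _ => (1:ℝ) : Fin (n+1) → ℝ)} := by
    intro f hf
    simp only [LinearMap.mem_ker, hΦ, LinearMap.coe_mk, AddHom.coe_mk] at hf
    have hf' : ∀ i, f (a i) = f (b i) := by
      intro i
      have := congrFun hf i
      simpa [sub_eq_zero] using this
    have hadjf : ∀ u v : Fin (n+1), T.Adj u v → f u = f v := by
      intro u v huv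
      have hmem : s(u, v) ∈ T.edgeSet := T.mem_edgeSet.mpr huv
      set i := ℓ.symm ⟨s(u, v), hmem⟩ with hi
      have : (ℓ i : Sym2 (Fin (n+1))) = s(u, v) := by
        rw [hi, Equiv.apply_symm_apply]
      rw [he i] at this
      rcases Sym2.eq_iff.mp this with ⟨h1, h2⟩ | ⟨h1, h2⟩
      · rw [← h1, ← h2]; exact hf' i
      · rw [← h1, ← h2]; exact (hf' i).symm
    have hconst : ∀ v, f v = f 0 := by
      intro v
      obtain ⟨w⟩ := hT.isConnected.preconnected 0 v
      exact (walk_const hadjf w).symm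
    rw [Submodule.mem_span_singleton]
    exact ⟨f 0, by funext v; simpa [hconst v] using (hconst v)⟩
  have hsurj : Function.Surjective Φ := by
    rw [← LinearMap.range_eq_top]
    apply Submodule.eq_top_of_finrank_eq
    have h1 : Module.finrank ℝ (LinearMap.range Φ) + Module.finrank ℝ (LinearMap.ker Φ)
        = n + 1 := by
      rw [LinearMap.finrank_range_add_finrank_ker Φ]
      simp [Module.finrank_pi]
    have h2 : Module.finrank ℝ (LinearMap.ker Φ) ≤ 1 := by
      have hne : (fun _ => (1:ℝ) : Fin (n+1) → ℝ) ≠ 0 := by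
        intro h
        have := congrFun h 0
        norm_num at this
      calc Module.finrank ℝ (LinearMap.ker Φ)
          ≤ Module.finrank ℝ (Submodule.span ℝ {(fun _ => (1:ℝ) : Fin (n+1) → ℝ)}) :=
            Submodule.finrank_mono hkerΦ
        _ = 1 := finrank_span_singleton hne
    have h3 : Module.finrank ℝ (LinearMap.range Φ) ≤ n := by
      have := Submodule.finrank_le (LinearMap.range Φ)
      simpa [Module.finrank_pi] using this
    have h4 : Module.finrank ℝ (Fin n → ℝ) = n := by simp [Module.finrank_pi]
    omega
  obtain ⟨f, hfΦ⟩ := hsurj c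
  have hinner : ∀ i, ∑ j, f j * D i j = c i * c i := by
    intro i
    have hterm : ∀ j, f j * D i j
        = c i * ((if j = a i then f j else 0) - (if j = b i then f j else 0)) := by
      intro j
      rw [hentry i j]
      by_cases h1 : j = a i
      · subst h1
        simp [hab i]
        ring
      · by_cases h2 : j = b i
        · subst h2
          simp [h1]
          ring
        · simp [h1, h2]
    rw [Finset.sum_congr rfl (fun j _ => hterm j), ← Finset.mul_sum,
      Finset.sum_sub_distrib, Finset.sum_ite_eq' Finset.univ (a i) f,
      Finset.sum_ite_eq' Finset.univ (b i) f]
    have hci : f (a i) - f (b i) = c i := by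
      have := congrFun hfΦ i
      simpa [hΦ] using this
    simp [hci]
  have h0 : (0:ℝ) = ∑ i, c i * c i := by
    calc (0:ℝ) = ∑ j, f j * (∑ i, D i j) := by simp [hcol]
      _ = ∑ j, ∑ i, f j * D i j := by simp [Finset.mul_sum]
      _ = ∑ i, ∑ j, f j * D i j := Finset.sum_comm
      _ = ∑ i, c i * c i := Finset.sum_congr rfl (fun i _ => hinner i)
  have hc0 : ∀ i, c i = 0 := by
    have hz := (Finset.sum_eq_zero_iff_of_nonneg
      (fun i _ => mul_self_nonneg (c i))).mp h0.symm
    intro i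
    exact mul_self_eq_zero.mp (hz i (Finset.mem_univ i))
  ext i j
  rw [hentry i j, hc0 i]
  simp

open SimpleGraph

noncomputable def compF {n : ℕ} (T : SimpleGraph (Fin (n+1))) (e : Sym2 (Fin (n+1)))
    (v : Fin (n+1)) : Finset (Fin (n+1)) :=
  @Finset.filter _ (fun w => (T.deleteEdges {e}).Reachable v w) (Classical.decPred _) Finset.univ

lemma mem_compF {n : ℕ} {T : SimpleGraph (Fin (n+1))} {e : Sym2 (Fin (n+1))}
    {v w : Fin (n+1)} : w ∈ compF T e v ↔ (T.deleteEdges {e}).Reachable v w := by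
  classical
  simp [compF]

noncomputable def treeArr {n : ℕ} (T : SimpleGraph (Fin (n+1))) (ℓ : Fin n ≃ T.edgeSet) :
    Matrix (Fin n) (Fin (n+1)) ℝ :=
  fun i j => if h : j ∈ (ℓ i : Sym2 (Fin (n+1))) then
    ((compF T (ℓ i) (Sym2.Mem.other' h)).card : ℝ) else 0

lemma reachable_delete_aux {V : Type*} {G : SimpleGraph V} (x y : V) :
    ∀ {u z : V}, G.Walk u z → (G.deleteEdges {s(x,y)}).Reachable u z ∨
      (G.deleteEdges {s(x,y)}).Reachable u x ∨ (G.deleteEdges {s(x,y)}).Reachable u y := by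
  intro u z w
  induction w with
  | nil => exact Or.inl (Reachable.refl _)
  | @cons u c _ h p ih =>
    by_cases he : s(u, c) = s(x, y)
    · rcases Sym2.eq_iff.mp he with ⟨rfl, rfl⟩ | ⟨rfl, rfl⟩
      · exact Or.inr (Or.inl (Reachable.refl _))
      · exact Or.inr (Or.inr (Reachable.refl _))
    · have hadj : (G.deleteEdges {s(x,y)}).Adj u c :=
        SimpleGraph.deleteEdges_adj.mpr ⟨h, by simpa using he⟩
      rcases ih with h1 | h1 | h1
      · exact Or.inl (hadj.reachable.trans h1)
      · exact Or.inr (Or.inl (hadj.reachable.trans h1))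
      · exact Or.inr (Or.inr (hadj.reachable.trans h1))

lemma reachable_delete_or {V : Type*} {G : SimpleGraph V} {x y u : V} (w : G.Walk u x) :
    (G.deleteEdges {s(x,y)}).Reachable u x ∨ (G.deleteEdges {s(x,y)}).Reachable u y := by
  rcases reachable_delete_aux x y w with h | h | h
  · exact Or.inl h
  · exact Or.inl h
  · exact Or.inr h

lemma tree_bridge {n : ℕ} {T : SimpleGraph (Fin (n+1))} (hT : T.IsTree) {x y : Fin (n+1)}
    (hadj : T.Adj x y) : ¬(T.deleteEdges {s(x,y)}).Reachable x y := by
  have hb := (isAcyclic_iff_forall_adj_isBridge.mp hT.2) hadj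
  exact isBridge_iff.mp hb

section TreeConstruction

variable {n : ℕ} {T : SimpleGraph (Fin (n+1))}

lemma compF_partition (hT : T.IsTree) {x y : Fin (n+1)} (hadj : T.Adj x y) :
    (compF T s(x,y) x).card + (compF T s(x,y) y).card = n + 1 := by
  classical
  have hdisj : Disjoint (compF T s(x,y) x) (compF T s(x,y) y) := by
    rw [Finset.disjoint_left]
    intro k hk1 hk2
    exact tree_bridge hT hadj ((mem_compF.mp hk1).trans (mem_compF.mp hk2).symm)
  have hcover : compF T s(x,y) x ∪ compF T s(x,y) y = Finset.univ := by
    apply Finset.eq_univ_iff_forall.mpr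
    intro k
    obtain ⟨w⟩ := hT.isConnected.preconnected k x
    rcases reachable_delete_or (y := y) w with h | h
    · exact Finset.mem_union_left _ (mem_compF.mpr h.symm)
    · exact Finset.mem_union_right _ (mem_compF.mpr h.symm)
  rw [← Finset.card_union_of_disjoint hdisj, hcover, Finset.card_univ, Fintype.card_fin]

lemma treeArr_nonneg (ℓ : Fin n ≃ T.edgeSet) (i : Fin n) (j : Fin (n+1)) :
    0 ≤ treeArr T ℓ i j := by
  unfold treeArr
  split <;> positivity

lemma other'_mem_compF {e : Sym2 (Fin (n+1))} {j : Fin (n+1)} (h : j ∈ e) :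
    Sym2.Mem.other' h ∈ compF T e (Sym2.Mem.other' h) :=
  mem_compF.mpr (Reachable.refl _)

lemma treeArr_ne_zero_iff (ℓ : Fin n ≃ T.edgeSet) (i : Fin n) (j : Fin (n+1)) :
    treeArr T ℓ i j ≠ 0 ↔ j ∈ (ℓ i : Sym2 (Fin (n+1))) := by
  unfold treeArr
  split
  · rename_i h
    simp only [ne_eq, Nat.cast_eq_zero, iff_true, h]
    intro hcard
    have := other'_mem_compF (T := T) h
    rw [Finset.card_eq_zero.mp hcard] at this
    simp at this
  · rename_i h
    simp [h]

lemma treeArr_row_sum (hT : T.IsTree) (ℓ : Fin n ≃ T.edgeSet) (i : Fin n) :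
    ∑ j, treeArr T ℓ i j = (n + 1 : ℝ) := by
  classical
  obtain ⟨x, y, hxy⟩ := sym2_exists_rep (ℓ i : Sym2 (Fin (n+1)))
  have hadj : T.Adj x y := T.mem_edgeSet.mp (hxy ▸ (ℓ i).2)
  have hx : x ∈ (ℓ i : Sym2 (Fin (n+1))) := by rw [hxy]; exact Sym2.mem_mk_left x y
  have hy : y ∈ (ℓ i : Sym2 (Fin (n+1))) := by rw [hxy]; exact Sym2.mem_mk_right x y
  have hox : Sym2.Mem.other' hx = y := by
    have h1 := (Sym2.other_spec' hx).trans hxy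
    exact Sym2.congr_right.mp h1
  have hoy : Sym2.Mem.other' hy = x := by
    have h1 := ((Sym2.other_spec' hy).trans hxy).trans (Sym2.eq_swap)
    exact Sym2.congr_right.mp h1
  have hvx : treeArr T ℓ i x = ((compF T (ℓ i) y).card : ℝ) := by
    unfold treeArr
    rw [dif_pos hx, hox]
  have hvy : treeArr T ℓ i y = ((compF T (ℓ i) x).card : ℝ) := by
    unfold treeArr
    rw [dif_pos hy, hoy]
  have hsum2 : ∑ j, treeArr T ℓ i j = treeArr T ℓ i x + treeArr T ℓ i y := by
    rw [← Finset.sum_pair hadj.ne]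
    apply (Finset.sum_subset (Finset.subset_univ _) _).symm
    intro z _ hz
    simp only [Finset.mem_insert, Finset.mem_singleton] at hz
    push_neg at hz
    by_contra h0
    have := (treeArr_ne_zero_iff ℓ i z).mp h0
    rw [hxy, Sym2.mem_iff] at this
    rcases this with h | h
    · exact hz.1 h
    · exact hz.2 h
  rw [hsum2, hvx, hvy]
  have := compF_partition hT hadj
  rw [← hxy] at this
  have : ((#(compF T (↑(ℓ i)) x) + #(compF T (↑(ℓ i)) y) : ℕ) : ℝ) = ((n:ℝ) + 1) := by
    rw [this]; push_cast; ring
  push_cast at this ⊢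
  linarith
end TreeConstruction

section TreeCol
variable {n : ℕ} {T : SimpleGraph (Fin (n+1))}

lemma not_self_mem_compF (hT : T.IsTree) (ℓ : Fin n ≃ T.edgeSet) {i : Fin n} {j : Fin (n+1)}
    (h : j ∈ (ℓ i : Sym2 (Fin (n+1)))) : j ∉ compF T (ℓ i) (Sym2.Mem.other' h) := by
  intro hmem
  set o := Sym2.Mem.other' h with ho
  have hspec : s(j, o) = (ℓ i : Sym2 (Fin (n+1))) := Sym2.other_spec' h
  have hadj : T.Adj j o := T.mem_edgeSet.mp (hspec ▸ (ℓ i).2)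
  have hb := tree_bridge hT hadj
  rw [hspec] at hb
  exact hb (mem_compF.mp hmem).symm

/-- Any valid `(i, h, reachability)` datum produces a path from `j` to `k` whose second
vertex is the other endpoint of `ℓ i`. -/
lemma build_path (hT : T.IsTree) (ℓ : Fin n ≃ T.edgeSet) {i : Fin n} {j k : Fin (n+1)}
    (h : j ∈ (ℓ i : Sym2 (Fin (n+1)))) (hk : k ∈ compF T (ℓ i) (Sym2.Mem.other' h)) :
    ∃ W : T.Walk j k, W.IsPath ∧ ∃ t, W.support = j :: (Sym2.Mem.other' h) :: t := by
  classical
  set o := Sym2.Mem.other' h with ho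
  have hspec : s(j, o) = (ℓ i : Sym2 (Fin (n+1))) := Sym2.other_spec' h
  have hadj : T.Adj j o := T.mem_edgeSet.mp (hspec ▸ (ℓ i).2)
  obtain ⟨q0⟩ := mem_compF.mp hk
  set q1 := q0.toPath with hq1
  have hjq : j ∉ q1.val.support := by
    intro hmem
    have hreach : (T.deleteEdges {(ℓ i : Sym2 (Fin (n+1)))}).Reachable o j :=
      ⟨q1.val.takeUntil j hmem⟩
    have hb := tree_bridge hT hadj
    rw [hspec] at hb
    exact hb hreach.symm
  set q2 := q1.val.mapLe (T.deleteEdges_le {(ℓ i : Sym2 (Fin (n+1)))}) with hq2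
  have hq2path : q2.IsPath := q1.2.mapLe _
  have hq2supp : q2.support = q1.val.support := by
    rw [hq2, SimpleGraph.Walk.support_map]
    have : ⇑(SimpleGraph.Hom.ofLE
        (T.deleteEdges_le {(ℓ i : Sym2 (Fin (n+1)))})) = id := rfl
    rw [this, List.map_id]
  refine ⟨SimpleGraph.Walk.cons hadj q2, ?_, ?_⟩
  · rw [SimpleGraph.Walk.cons_isPath_iff]
    exact ⟨hq2path, by rwa [hq2supp]⟩
  · refine ⟨q2.support.tail, ?_⟩
    rw [SimpleGraph.Walk.support_cons]
    congr 1
    exact q2.support_eq_cons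

lemma col_exists_unique (hT : T.IsTree) (ℓ : Fin n ≃ T.edgeSet) {j k : Fin (n+1)}
    (hkj : k ≠ j) :
    ∃! i : Fin n, ∃ h : j ∈ (ℓ i : Sym2 (Fin (n+1))),
      k ∈ compF T (ℓ i) (Sym2.Mem.other' h) := by
  classical
  have huniq : ∀ i i' : Fin n,
      (∃ h : j ∈ (ℓ i : Sym2 (Fin (n+1))), k ∈ compF T (ℓ i) (Sym2.Mem.other' h)) →
      (∃ h : j ∈ (ℓ i' : Sym2 (Fin (n+1))), k ∈ compF T (ℓ i') (Sym2.Mem.other' h)) →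
      i = i' := by
    rintro i i' ⟨h, hk⟩ ⟨h', hk'⟩
    obtain ⟨W, hW, t, hWs⟩ := build_path hT ℓ h hk
    obtain ⟨W', hW', t', hWs'⟩ := build_path hT ℓ h' hk'
    have hWW : W = W' := ((hT.existsUnique_path j k).unique hW hW')
    rw [hWW, hWs'] at hWs
    have hoo : Sym2.Mem.other' h' = Sym2.Mem.other' h := by
      have := List.tail_eq_of_cons_eq hWs
      exact (List.head_eq_of_cons_eq this)
    apply ℓ.injective
    apply Subtype.ext
    rw [← Sym2.other_spec' h, ← Sym2.other_spec' h', hoo]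
  -- existence
  obtain ⟨w⟩ := hT.isConnected.preconnected j k
  obtain ⟨pw, hpw⟩ := w.toPath
  cases pw with
  | nil => exact absurd rfl hkj.symm
  | @cons _ c _ hadj q =>
    have hq : q.IsPath ∧ j ∉ q.support := by
      rw [SimpleGraph.Walk.cons_isPath_iff] at hpw
      exact hpw
    have he0 : s(j, c) ∈ T.edgeSet := T.mem_edgeSet.mpr hadj
    set i0 := ℓ.symm ⟨s(j, c), he0⟩ with hi0def
    have hi0 : (ℓ i0 : Sym2 (Fin (n+1))) = s(j, c) := by
      rw [hi0def, Equiv.apply_symm_apply]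
    have h0 : j ∈ (ℓ i0 : Sym2 (Fin (n+1))) := by
      rw [hi0]; exact Sym2.mem_mk_left j c
    have hother : Sym2.Mem.other' h0 = c :=
      Sym2.congr_right.mp ((Sym2.other_spec' h0).trans hi0)
    have hreach : (T.deleteEdges {(ℓ i0 : Sym2 (Fin (n+1)))}).Reachable c k := by
      have hna : ∀ e ∈ q.edges, e ∉ ({(ℓ i0 : Sym2 (Fin (n+1)))} : Set (Sym2 (Fin (n+1)))) := by
        intro e hee
        simp only [Set.mem_singleton_iff, hi0]
        rintro rfl
        exact hq.2 (q.fst_mem_support_of_mem_edges hee)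
      exact ⟨q.toDeleteEdges _ hna⟩
    refine ⟨i0, ⟨h0, mem_compF.mpr (by rwa [hother])⟩, ?_⟩
    intro i' hi'
    exact huniq i' i0 hi' ⟨h0, mem_compF.mpr (by rwa [hother])⟩

lemma treeArr_col_sum (hT : T.IsTree) (ℓ : Fin n ≃ T.edgeSet) (j : Fin (n+1)) :
    ∑ i, treeArr T ℓ i j = (n : ℝ) := by
  classical
  have hterm : ∀ i, treeArr T ℓ i j = ∑ k, (if ∃ h : j ∈ (ℓ i : Sym2 (Fin (n+1))),
      k ∈ compF T (ℓ i) (Sym2.Mem.other' h) then (1:ℝ) else 0) := by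
    intro i
    by_cases h : j ∈ (ℓ i : Sym2 (Fin (n+1)))
    · unfold treeArr
      rw [dif_pos h, Finset.sum_boole]
      congr 1
      norm_cast
      congr 1
      ext k
      simp only [Finset.mem_filter, Finset.mem_univ, true_and]
      constructor
      · intro hk; exact ⟨h, hk⟩
      · rintro ⟨h', hk⟩; exact hk
    · unfold treeArr
      rw [dif_neg h]
      symm
      apply Finset.sum_eq_zero
      intro k _
      rw [if_neg]
      rintro ⟨h', _⟩
      exact h h'
  rw [Finset.sum_congr rfl (fun i _ => hterm i), Finset.sum_comm]
  have hinner : ∀ k, (∑ i, if ∃ h : j ∈ (ℓ i : Sym2 (Fin (n+1))),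
      k ∈ compF T (ℓ i) (Sym2.Mem.other' h) then (1:ℝ) else 0)
      = if k = j then 0 else 1 := by
    intro k
    by_cases hkj : k = j
    · subst hkj
      rw [if_pos rfl]
      apply Finset.sum_eq_zero
      intro i _
      rw [if_neg]
      rintro ⟨h, hk⟩
      exact not_self_mem_compF hT ℓ h hk
    · rw [if_neg hkj]
      obtain ⟨i0, hi0, huniq⟩ := col_exists_unique hT ℓ hkj
      rw [Finset.sum_eq_single_of_mem i0 (Finset.mem_univ _)]
      · rw [if_pos hi0]
      · intro i' _ hne
        rw [if_neg]
        intro hP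
        exact hne (huniq i' hP)
  rw [Finset.sum_congr rfl (fun k _ => hinner k)]
  have : ∀ k : Fin (n+1), (if k = j then (0:ℝ) else 1) = 1 - (if k = j then 1 else 0) := by
    intro k; split <;> norm_num
  rw [Finset.sum_congr rfl (fun k _ => this k), Finset.sum_sub_distrib,
    Finset.sum_ite_eq' Finset.univ j (fun _ => (1:ℝ))]
  simp [Finset.card_univ]

end TreeCol

/-- Part 1: existence and uniqueness of the extremal array attached to a labeled tree. -/
lemma part_one {n : ℕ} (T : SimpleGraph (Fin (n + 1))) (hT : T.IsTree)
    (ℓ : Fin n ≃ T.edgeSet) :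
    ∃! A : Matrix (Fin n) (Fin (n + 1)) ℝ, IsExtremal n (n + 1) A ∧
      ∀ i j, A i j ≠ 0 ↔ j ∈ (ℓ i : Sym2 (Fin (n + 1))) := by
  have hdsa : IsDSA n (n+1) (treeArr T ℓ) := by
    refine ⟨treeArr_nonneg ℓ, fun j => ?_, fun i => ?_⟩
    · rw [treeArr_col_sum hT ℓ j]
    · rw [treeArr_row_sum hT ℓ i]; push_cast; ring
  have hsupp := treeArr_ne_zero_iff ℓ
  refine ⟨treeArr T ℓ, ⟨?_, hsupp⟩, ?_⟩
  · apply extremal_of_kernel hdsa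
    intro D h1 h2 hs
    apply tree_kernel hT ℓ D h1 h2
    intro i j hD
    by_contra hj
    have : treeArr T ℓ i j = 0 := by
      by_contra h0
      exact hj ((hsupp i j).mp h0)
    exact hD (hs i j this)
  · intro A' ⟨hA'ext, hA'supp⟩
    have hdiff : A' - treeArr T ℓ = 0 := by
      apply tree_kernel hT ℓ
      · intro i
        simp [Matrix.sub_apply, Finset.sum_sub_distrib, hA'ext.1.2.2 i, hdsa.2.2 i]
      · intro j
        simp [Matrix.sub_apply, Finset.sum_sub_distrib, hA'ext.1.2.1 j, hdsa.2.1 j]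
      · intro i j hD
        rw [Matrix.sub_apply] at hD
        by_cases h1 : A' i j = 0
        · rw [h1] at hD
          simp only [zero_sub, neg_ne_zero] at hD
          exact (hsupp i j).mp hD
        · exact (hA'supp i j).mp h1
    have := sub_eq_zero.mp hdiff
    exact this

lemma dart_sum {V : Type*} {G : SimpleGraph V} [DecidableEq V] {u v : V} (p : G.Walk u v)
    (y : V) :
    ((p.darts.map (fun d => (if d.fst = y then (1:ℝ) else 0) -
      (if d.snd = y then 1 else 0))).sum)
    = (if u = y then (1:ℝ) else 0) - (if v = y then 1 else 0) := by
  induction p with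
  | nil => simp
  | cons h p ih =>
    rw [SimpleGraph.Walk.darts_cons, List.map_cons, List.sum_cons, ih]
    simp only []
    ring

lemma extremal_to_tree {n : ℕ} (hn : 0 < n) {A : Matrix (Fin n) (Fin (n+1)) ℝ}
    (hA : IsExtremal n (n+1) A) :
    ∃ (T : SimpleGraph (Fin (n+1))) (_hT : T.IsTree) (ℓ : Fin n ≃ T.edgeSet),
      ∀ i j, A i j ≠ 0 ↔ j ∈ (ℓ i : Sym2 (Fin (n+1))) := by
  classical
  obtain ⟨a, b, hab, hiff⟩ := extremal_rows_exactly_two hn hA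
  set E : Fin n → Sym2 (Fin (n+1)) := fun i => s(a i, b i) with hE
  set T : SimpleGraph (Fin (n+1)) := SimpleGraph.fromEdgeSet (Set.range E) with hTdef
  have hTadj : ∀ u v, T.Adj u v ↔ s(u,v) ∈ Set.range E ∧ u ≠ v := by
    intro u v; rw [hTdef]; exact SimpleGraph.fromEdgeSet_adj _
  have hTedge : T.edgeSet = Set.range E := by
    rw [hTdef, SimpleGraph.edgeSet_fromEdgeSet]
    ext e
    simp only [Set.mem_diff, Set.mem_setOf_eq, and_iff_left_iff_imp]
    rintro ⟨i, rfl⟩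
    rw [hE]
    simp only [Sym2.isDiag_iff_proj_eq]
    exact hab i
  have hEinj : Function.Injective E := by
    intro i i' hEe
    by_contra hne
    set D : Matrix (Fin n) (Fin (n+1)) ℝ := fun x y =>
      ((if x = i then (1:ℝ) else 0) - (if x = i' then 1 else 0)) *
        ((if y = a i then (1:ℝ) else 0) - (if y = b i then 1 else 0)) with hD
    have hD0 : D = 0 := by
      apply extremal_kernel hA
      · intro x
        rw [← Finset.mul_sum, Finset.sum_sub_distrib,
          Finset.sum_ite_eq' Finset.univ (a i) (fun _ => (1:ℝ)),
          Finset.sum_ite_eq' Finset.univ (b i) (fun _ => (1:ℝ))]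
        simp
      · intro y
        rw [← Finset.sum_mul, Finset.sum_sub_distrib,
          Finset.sum_ite_eq' Finset.univ i (fun _ => (1:ℝ)),
          Finset.sum_ite_eq' Finset.univ i' (fun _ => (1:ℝ))]
        simp
      · intro x y hxy0
        rw [hD]
        by_cases hx1 : x = i
        · subst hx1
          have : A x y ≠ 0 → False := fun h => h hxy0
          by_cases hy1 : y = a x
          · exact absurd hxy0 (by rw [hy1]; exact (hiff x (a x)).mpr (Or.inl rfl))
          · by_cases hy2 : y = b x
            · exact absurd hxy0 (by rw [hy2]; exact (hiff x (b x)).mpr (Or.inr rfl))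
            · simp [hy1, hy2]
        · by_cases hx2 : x = i'
          · subst hx2
            have hcases := Sym2.eq_iff.mp hEe
            by_cases hy1 : y = a i
            · exfalso
              have hmem : A x y ≠ 0 := by
                apply (hiff x y).mpr
                rcases hcases with ⟨h1, h2⟩ | ⟨h1, h2⟩
                · exact Or.inl (hy1.trans h1)
                · exact Or.inr (hy1.trans h1)
              exact hmem hxy0
            · by_cases hy2 : y = b i
              · exfalso
                have hmem : A x y ≠ 0 := by
                  apply (hiff x y).mpr
                  rcases hcases with ⟨h1, h2⟩ | ⟨h1, h2⟩
                  · exact Or.inr (hy2.trans h2)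
                  · exact Or.inl (hy2.trans h2)
                exact hmem hxy0
              · simp [hy1, hy2]
          · simp [hx1, hx2]
    have heval := congrFun (congrFun hD0 i) (a i)
    rw [hD] at heval
    simp [hne, hab i] at heval
  have hbij : Function.Bijective (fun i => (⟨E i, by
      rw [hTedge]; exact Set.mem_range_self i⟩ : T.edgeSet)) := by
    constructor
    · intro i i' h
      exact hEinj (congrArg Subtype.val h)
    · rintro ⟨e, he⟩
      have he' := he
      rw [hTedge] at he'
      obtain ⟨i, hi⟩ := he'
      exact ⟨i, Subtype.ext hi⟩
  set ℓ : Fin n ≃ T.edgeSet := Equiv.ofBijective _ hbij with hℓ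
  have hℓval : ∀ i, (ℓ i : Sym2 (Fin (n+1))) = E i := fun i => rfl
  have hsupp : ∀ i j, A i j ≠ 0 ↔ j ∈ (ℓ i : Sym2 (Fin (n+1))) := by
    intro i j
    rw [hℓval i, hE, hiff i j]
    exact (Sym2.mem_iff).symm
  have hconn : T.Connected := by
    set S : Finset (Fin (n+1)) := Finset.univ.filter (fun v => T.Reachable 0 v) with hS
    have hmemS : ∀ v, v ∈ S ↔ T.Reachable 0 v := by
      intro v; simp [hS]
    have hSclosed : ∀ u v, T.Adj u v → u ∈ S → v ∈ S := by
      intro u v huv hu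
      rw [hmemS] at hu ⊢
      exact hu.trans huv.reachable
    have hSedge : ∀ i, (a i ∈ S ↔ b i ∈ S) := by
      intro i
      have hadj : T.Adj (a i) (b i) := by
        rw [hTadj]
        exact ⟨⟨i, rfl⟩, hab i⟩
      exact ⟨hSclosed _ _ hadj, hSclosed _ _ hadj.symm⟩
    set K : Finset (Fin n) := Finset.univ.filter (fun i => a i ∈ S) with hK
    have hsum1 : ∑ j ∈ S, (∑ i, A i j) = (n : ℝ) * S.card := by
      rw [Finset.sum_congr rfl (fun j _ => hA.1.2.1 j), Finset.sum_const, nsmul_eq_mul]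
      ring
    have hsum2 : ∑ j ∈ S, (∑ i, A i j) = ((n : ℝ) + 1) * K.card := by
      rw [Finset.sum_comm]
      have hrow : ∀ i, (∑ j ∈ S, A i j) = if i ∈ K then ((n:ℝ)+1) else 0 := by
        intro i
        by_cases hiK : i ∈ K
        · rw [if_pos hiK]
          have haS : a i ∈ S := by
            rw [hK] at hiK; simpa using hiK
          have hbS : b i ∈ S := (hSedge i).mp haS
          have : ∑ j ∈ S, A i j = ∑ j, A i j := by
            apply Finset.sum_subset (Finset.subset_univ S)
            intro x _ hx
            by_contra h0
            rcases (hiff i x).mp h0 with rfl | rfl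
            · exact hx haS
            · exact hx hbS
          rw [this, hA.1.2.2 i]
          push_cast; ring
        · rw [if_neg hiK]
          apply Finset.sum_eq_zero
          intro x hx
          by_contra h0
          have haS : a i ∈ S := by
            rcases (hiff i x).mp h0 with rfl | rfl
            · exact hx
            · exact (hSedge i).mpr hx
          exact hiK (by rw [hK]; simpa using haS)
      rw [Finset.sum_congr rfl (fun i _ => hrow i), Finset.sum_ite_mem,
        Finset.univ_inter, Finset.sum_const, nsmul_eq_mul]
      ring
    have hnat : n * S.card = (n+1) * K.card := by
      have := hsum1.symm.trans hsum2
      exact_mod_cast this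
    have hdvd : (n+1) ∣ S.card := by
      have h1 : (n+1) ∣ n * S.card := ⟨K.card, hnat⟩
      have hcop : Nat.Coprime (n+1) n := by
        simpa using Nat.coprime_succ_self n
      exact hcop.dvd_of_dvd_mul_left h1
    have hpos : 0 < S.card := by
      apply Finset.card_pos.mpr
      exact ⟨0, (hmemS 0).mpr (SimpleGraph.Reachable.refl 0)⟩
    have hcard : S.card = n + 1 := by
      have hle : S.card ≤ n + 1 := by
        have := Finset.card_le_univ S
        simpa using this
      have := Nat.le_of_dvd hpos hdvd
      omega
    have hSuniv : S = Finset.univ := by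
      apply Finset.eq_univ_of_card
      rw [hcard, Fintype.card_fin]
    have hpre : T.Preconnected := by
      intro u v
      have hu : T.Reachable 0 u := (hmemS u).mp (hSuniv ▸ Finset.mem_univ u)
      have hv : T.Reachable 0 v := (hmemS v).mp (hSuniv ▸ Finset.mem_univ v)
      exact hu.symm.trans hv
    exact SimpleGraph.Connected.mk hpre
  have hacyc : T.IsAcyclic := by
    intro v c hc
    have hrowex : ∀ d : T.Dart, ∃ i, E i = d.edge := by
      intro d
      have hm := d.edge_mem
      rw [hTedge] at hm
      exact hm
    choose row hrow using hrowex
    have hednd : c.edges.Nodup := hc.edges_nodup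
    have hldnd : c.darts.Nodup := by
      have : c.edges = c.darts.map SimpleGraph.Dart.edge := rfl
      rw [this] at hednd
      exact hednd.of_map
    have hedgeinj : ∀ d ∈ c.darts, ∀ d' ∈ c.darts, d.edge = d'.edge → d = d' := by
      have : c.edges = c.darts.map SimpleGraph.Dart.edge := rfl
      rw [this] at hednd
      exact fun d hd d' hd' h => List.inj_on_of_nodup_map hednd hd hd' h
    set D : Matrix (Fin n) (Fin (n+1)) ℝ := fun x y =>
      ∑ d ∈ c.darts.toFinset, (if row d = x then (1:ℝ) else 0) *
        ((if d.fst = y then (1:ℝ) else 0) - (if d.snd = y then 1 else 0)) with hD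
    have hD0 : D = 0 := by
      apply extremal_kernel hA
      · intro x
        rw [Finset.sum_comm]
        apply Finset.sum_eq_zero
        intro d _
        rw [← Finset.mul_sum, Finset.sum_sub_distrib,
          Finset.sum_ite_eq Finset.univ d.fst (fun _ => (1:ℝ)),
          Finset.sum_ite_eq Finset.univ d.snd (fun _ => (1:ℝ))]
        simp
      · intro y
        rw [Finset.sum_comm]
        have hterm : ∀ d ∈ c.darts.toFinset,
            (∑ x, (if row d = x then (1:ℝ) else 0) *
              ((if d.fst = y then (1:ℝ) else 0) - (if d.snd = y then 1 else 0)))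
            = ((if d.fst = y then (1:ℝ) else 0) - (if d.snd = y then 1 else 0)) := by
          intro d _
          rw [← Finset.sum_mul, Finset.sum_ite_eq Finset.univ (row d) (fun _ => (1:ℝ))]
          simp
        rw [Finset.sum_congr rfl hterm, List.sum_toFinset _ hldnd]
        rw [dart_sum c y]
        ring
      · intro x y hxy0
        rw [hD]
        apply Finset.sum_eq_zero
        intro d _
        by_cases h1 : row d = x
        · by_cases h2 : d.fst = y
          · exfalso
            have hEx : E x = d.edge := h1 ▸ hrow d
            have : y ∈ E x := by
              rw [hEx, ← h2]
              exact Sym2.mem_mk_left _ _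
            rw [hE] at this
            rcases Sym2.mem_iff.mp this with h | h
            · exact (hiff x y).mpr (Or.inl h) hxy0
            · exact (hiff x y).mpr (Or.inr h) hxy0
          · by_cases h3 : d.snd = y
            · exfalso
              have hEx : E x = d.edge := h1 ▸ hrow d
              have : y ∈ E x := by
                rw [hEx, ← h3]
                exact Sym2.mem_mk_right _ _
              rw [hE] at this
              rcases Sym2.mem_iff.mp this with h | h
              · exact (hiff x y).mpr (Or.inl h) hxy0
              · exact (hiff x y).mpr (Or.inr h) hxy0
            · simp [h2, h3]
        · simp [h1]
    rw [SimpleGraph.Walk.isCycle_def] at hc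
    cases c with
    | nil => exact hc.2.1 rfl
    | @cons _ w _ hadj q =>
      set d0 : T.Dart := ⟨(v, w), hadj⟩ with hd0
      have hd0mem : d0 ∈ (SimpleGraph.Walk.cons hadj q).darts := by
        rw [SimpleGraph.Walk.darts_cons]
        exact List.mem_cons_self
      have heval := congrFun (congrFun hD0 (row d0)) v
      simp only [hD, Matrix.zero_apply] at heval
      rw [Finset.sum_eq_single_of_mem d0 (List.mem_toFinset.mpr hd0mem)] at heval
      · have hfst : d0.fst = v := rfl
        have hsnd : d0.snd = w := rfl
        have hvw : v ≠ w := hadj.ne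
        rw [if_pos rfl, hfst, hsnd, if_pos rfl, if_neg (Ne.symm hvw)] at heval
        simp at heval
      · intro d hd hne
        rw [if_neg, zero_mul]
        intro hrowd
        apply hne
        apply hedgeinj d (List.mem_toFinset.mp hd) d0 hd0mem
        rw [← hrow d, ← hrow d0, hrowd]
  exact ⟨T, ⟨hconn, hacyc⟩, ℓ, hsupp⟩


/-- For every tree `T` on `n+1` labeled vertices together with a
bijection `ℓ` labeling its edges by `{1,…,n}` there is a unique extremal array
`A ∈ S(n, n+1)` whose support positions `(i,j)` are exactly those with vertex `j`
an endpoint of edge `ℓ(i)`; moreover, the map `(T,ℓ) ↦ A` is a bijection onto the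
set of extremal arrays in `S(n, n+1)`. -/
theorem tree_extremal_correspondence (n : ℕ) (hn : 0 < n) :
    (∀ (T : SimpleGraph (Fin (n + 1))), T.IsTree → ∀ (ℓ : Fin n ≃ T.edgeSet),
      ∃! A : Matrix (Fin n) (Fin (n + 1)) ℝ, IsExtremal n (n + 1) A ∧
        ∀ i j, A i j ≠ 0 ↔ j ∈ (ℓ i : Sym2 (Fin (n + 1)))) ∧
    (∀ F : ((T : {T : SimpleGraph (Fin (n + 1)) // T.IsTree}) ×
        (Fin n ≃ T.val.edgeSet)) → Matrix (Fin n) (Fin (n + 1)) ℝ,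
      (∀ p, IsExtremal n (n + 1) (F p) ∧
        ∀ i j, F p i j ≠ 0 ↔ j ∈ (p.2 i : Sym2 (Fin (n + 1)))) →
      Function.Injective F ∧
        Set.range F = {A : Matrix (Fin n) (Fin (n + 1)) ℝ | IsExtremal n (n + 1) A}) := by
  constructor
  · intro T hT ℓ
    exact part_one T hT ℓ
  · intro F hF
    constructor
    · rintro ⟨⟨T, hT⟩, ℓ⟩ ⟨⟨T', hT'⟩, ℓ'⟩ hFeq
      have hmem : ∀ i (j : Fin (n+1)),
          (j ∈ (ℓ i : Sym2 (Fin (n+1)))) ↔ (j ∈ (ℓ' i : Sym2 (Fin (n+1)))) := by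
        intro i j
        have e1 := (hF ⟨⟨T, hT⟩, ℓ⟩).2 i j
        have e2 := (hF ⟨⟨T', hT'⟩, ℓ'⟩).2 i j
        rw [hFeq] at e1
        exact Iff.trans (Iff.symm e1) e2
      have hval : ∀ i, (ℓ i : Sym2 (Fin (n+1))) = (ℓ' i : Sym2 (Fin (n+1))) :=
        fun i => Sym2.ext (hmem i)
      have hTT : T = T' := by
        rw [← SimpleGraph.edgeSet_inj]
        ext e
        constructor
        · intro he
          have h1 : e = (ℓ (ℓ.symm ⟨e, he⟩) : Sym2 (Fin (n+1))) := by
            rw [Equiv.apply_symm_apply]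
          rw [h1, hval]
          exact (ℓ' (ℓ.symm ⟨e, he⟩)).2
        · intro he
          have h1 : e = (ℓ' (ℓ'.symm ⟨e, he⟩) : Sym2 (Fin (n+1))) := by
            rw [Equiv.apply_symm_apply]
          rw [h1, ← hval]
          exact (ℓ (ℓ'.symm ⟨e, he⟩)).2
      subst hTT
      have hll : ℓ = ℓ' := by
        apply Equiv.ext
        intro i
        exact Subtype.ext (hval i)
      subst hll
      rfl
    · ext A
      simp only [Set.mem_range, Set.mem_setOf_eq]
      constructor
      · rintro ⟨p, rfl⟩
        exact (hF p).1
      · intro hA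
        obtain ⟨T, hT, ℓ, hsupp⟩ := extremal_to_tree hn hA
        obtain ⟨A₀, hA₀, huniq⟩ := part_one T hT ℓ
        have h1 : F ⟨⟨T, hT⟩, ℓ⟩ = A₀ := huniq _ (hF ⟨⟨T, hT⟩, ℓ⟩)
        have h2 : A = A₀ := huniq A ⟨hA, hsupp⟩
        exact ⟨⟨⟨T, hT⟩, ℓ⟩, h1.trans h2.symm⟩
end

section
/- Let n be a positive integer, let T be a tree on the vertex set {1,…,n+1}, let ℓ be a bijection from {1,…,n} onto the edge set of T, and let A be an extremal array in S(n, n+1) such that for all i, j: A(i,j) ≠ 0 if and only if the vertex j is an endpoint of the edge ℓ(i). Then for every pair (i,j) with A(i,j) ≠ 0, the entry A(i,j) equals the number of vertices of the connected component of the graph obtained from T by deleting the edge ℓ(i) that does not contain the vertex j. -/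
open SimpleGraph Finset

section Aux

variable {V : Type*} {G : SimpleGraph V}

lemma aux_map_val_mem_edgeSet {S : Set V} {eh : Sym2 ↥S}
    (h : eh ∈ (G.induce S).edgeSet) : Sym2.map Subtype.val eh ∈ G.edgeSet := by
  induction eh using Sym2.ind with
  | _ a b =>
    rw [SimpleGraph.mem_edgeSet] at h
    rw [Sym2.map_pair_eq, SimpleGraph.mem_edgeSet]
    exact h

lemma aux_ne_of_mem_deleteEdges {e d : Sym2 V} (h : d ∈ (G.deleteEdges {e}).edgeSet) :
    d ≠ e := by
  induction d using Sym2.ind with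
  | _ a b =>
    rw [SimpleGraph.mem_edgeSet, SimpleGraph.deleteEdges_adj] at h
    simpa using h.2

lemma aux_induce_component_connected [DecidableEq V] (j : V) :
    (G.induce {v | G.Reachable j v}).Connected := by
  refine G.induce_connected_of_patches j ?_ ?_
  · exact Reachable.refl j
  intro v hv
  obtain ⟨p⟩ := (hv : G.Reachable j v)
  refine ⟨{x | x ∈ p.support}, ?_, p.start_mem_support, p.end_mem_support, ?_⟩
  · intro x hx
    exact ⟨p.takeUntil x hx⟩
  · exact (p.connected_induce_support).preconnected _ _

lemma aux_induce_acyclic {S : Set V} (h : G.IsAcyclic) : (G.induce S).IsAcyclic := by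
  intro v c hc
  exact h (c.map (SimpleGraph.Embedding.induce S).toHom)
    ((Walk.map_isCycle_iff_of_injective Subtype.val_injective).mpr hc)

lemma aux_acyclic_mono {G' : SimpleGraph V} (hle : G ≤ G') (h : G'.IsAcyclic) : G.IsAcyclic := by
  intro v c hc
  exact h (c.mapLe hle) ((Walk.mapLe_isCycle hle).mpr hc)

end Aux

/-- If the extremal array `A ∈ S(n, n+1)` corresponds to the tree
`T` with edge labeling `ℓ`, then each nonzero entry `A i j` equals the number of
vertices of the connected component of `T` minus the edge `ℓ(i)` that does not
contain the vertex `j`. -/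
theorem extremal_entry_eq_component_card (n : ℕ) (hn : 0 < n)
    (T : SimpleGraph (Fin (n + 1))) (hT : T.IsTree) (ℓ : Fin n ≃ T.edgeSet)
    (A : Matrix (Fin n) (Fin (n + 1)) ℝ) (hA : IsExtremal n (n + 1) A)
    (hsupp : ∀ i j, A i j ≠ 0 ↔ j ∈ (ℓ i : Sym2 (Fin (n + 1)))) :
    ∀ i j, A i j ≠ 0 →
      A i j = (({v : Fin (n + 1) |
        ¬ (T.deleteEdges {(ℓ i : Sym2 (Fin (n + 1)))}).Reachable j v}).ncard : ℝ) := by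
  intro i j hAij
  classical
  set e : Sym2 (Fin (n + 1)) := (ℓ i : Sym2 (Fin (n + 1))) with he
  have hj : j ∈ e := (hsupp i j).mp hAij
  set k : Fin (n + 1) := Sym2.Mem.other hj with hk
  have hjk : s(j, k) = e := Sym2.other_spec hj
  have hTadj : T.Adj j k := T.mem_edgeSet.mp (by rw [hjk]; exact (ℓ i).2)
  set G : SimpleGraph (Fin (n + 1)) := T.deleteEdges {e} with hG
  have hnotreach : ¬ G.Reachable j k := by
    have hbr := (SimpleGraph.isAcyclic_iff_forall_adj_isBridge.mp hT.IsAcyclic) hTadj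
    have h2 := SimpleGraph.isBridge_iff.mp hbr
    rw [hjk] at h2
    exact h2
  set S : Set (Fin (n + 1)) := {v | G.Reachable j v} with hSdef
  have hjS : j ∈ S := Reachable.refl j
  have hkS : k ∉ S := hnotreach
  have hsupp0 : ∀ (i' : Fin n) (v : Fin (n + 1)), A i' v ≠ 0 →
      v ∈ (ℓ i' : Sym2 (Fin (n + 1))) := fun i' v h => (hsupp i' v).mp h
  -- endpoints of other edges lie in the same component
  have hQ : ∀ i', i' ≠ i → ∀ v ∈ S, A i' v ≠ 0 →
      ∀ x ∈ (ℓ i' : Sym2 (Fin (n + 1))), x ∈ S := by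
    intro i' hi' v hv hAv
    have hv' : G.Reachable j v := hv
    have hvd : v ∈ (ℓ i' : Sym2 (Fin (n + 1))) := hsupp0 i' v hAv
    have hdw : s(v, Sym2.Mem.other hvd) = (ℓ i' : Sym2 (Fin (n + 1))) := Sym2.other_spec hvd
    have hdne : (ℓ i' : Sym2 (Fin (n + 1))) ≠ e := by
      intro h
      exact hi' (ℓ.injective (Subtype.ext h))
    have hTvw : T.Adj v (Sym2.Mem.other hvd) := T.mem_edgeSet.mp (by rw [hdw]; exact (ℓ i').2)
    have hGvw : G.Adj v (Sym2.Mem.other hvd) := by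
      rw [hG, SimpleGraph.deleteEdges_adj]
      refine ⟨hTvw, ?_⟩
      rw [Set.mem_singleton_iff, hdw]
      exact hdne
    have hwS : (Sym2.Mem.other hvd) ∈ S := hv'.trans hGvw.reachable
    intro x hx
    rw [← hdw, Sym2.mem_iff] at hx
    rcases hx with rfl | rfl
    · exact hv
    · exact hwS
  letI : Fintype ↥S := Fintype.ofFinite _
  set H : SimpleGraph ↥S := G.induce S with hH
  letI : Fintype ↥H.edgeSet := Fintype.ofFinite _
  have htree : H.IsTree :=
    ⟨aux_induce_component_connected j,
     aux_induce_acyclic (aux_acyclic_mono (SimpleGraph.deleteEdges_le {e}) hT.IsAcyclic)⟩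
  have hcard : H.edgeFinset.card + 1 = Fintype.card ↥S := htree.card_edgeFinset
  set P : Finset (Fin n) := (Finset.univ.erase i).filter
      (fun i' => ∀ x ∈ (ℓ i' : Sym2 (Fin (n + 1))), x ∈ S) with hP
  have hedgeG : ∀ eh : Sym2 ↥S, eh ∈ H.edgeFinset → Sym2.map Subtype.val eh ∈ G.edgeSet :=
    fun eh heh => aux_map_val_mem_edgeSet (SimpleGraph.mem_edgeFinset.mp heh)
  have hedgeT : ∀ eh : Sym2 ↥S, eh ∈ H.edgeFinset → Sym2.map Subtype.val eh ∈ T.edgeSet :=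
    fun eh heh => SimpleGraph.edgeSet_mono (SimpleGraph.deleteEdges_le {e}) (hedgeG eh heh)
  have hbij : H.edgeFinset.card = P.card := by
    refine Finset.card_bij
      (fun eh heh => ℓ.symm ⟨Sym2.map Subtype.val eh, hedgeT eh heh⟩) ?_ ?_ ?_
    · intro eh heh
      rw [hP, Finset.mem_filter, Finset.mem_erase]
      have happ : (ℓ (ℓ.symm ⟨Sym2.map Subtype.val eh, hedgeT eh heh⟩) : Sym2 (Fin (n + 1)))
          = Sym2.map Subtype.val eh := by rw [Equiv.apply_symm_apply]
      refine ⟨⟨?_, Finset.mem_univ _⟩, ?_⟩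
      · intro h
        apply aux_ne_of_mem_deleteEdges (hedgeG eh heh)
        rw [← happ, h]
      · intro x hx
        rw [happ] at hx
        obtain ⟨a, _, rfl⟩ := Sym2.mem_map.mp hx
        exact a.2
    · intro e1 h1 e2 h2 hee
      have h3 := congrArg (fun z => (ℓ z : Sym2 (Fin (n + 1)))) hee
      simp only [Equiv.apply_symm_apply] at h3
      exact Sym2.map.injective Subtype.val_injective h3
    · intro i' hi'
      rw [hP, Finset.mem_filter, Finset.mem_erase] at hi'
      obtain ⟨⟨hne, -⟩, hall⟩ := hi'
      have hdT : (ℓ i' : Sym2 (Fin (n + 1))) ∈ T.edgeSet := (ℓ i').2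
      have hdne : (ℓ i' : Sym2 (Fin (n + 1))) ≠ e :=
        fun h => hne (ℓ.injective (Subtype.ext h))
      have hrep : ∀ z : Sym2 (Fin (n + 1)), ∃ u v, z = s(u, v) :=
        fun z => Sym2.ind (fun u v => ⟨u, v, rfl⟩) z
      obtain ⟨u, v, huv⟩ := hrep (ℓ i' : Sym2 (Fin (n + 1)))
      have hu : u ∈ S := hall u (by rw [huv]; exact Sym2.mem_iff.mpr (Or.inl rfl))
      have hv : v ∈ S := hall v (by rw [huv]; exact Sym2.mem_iff.mpr (Or.inr rfl))
      have hGuv : G.Adj u v := by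
        rw [hG, SimpleGraph.deleteEdges_adj]
        refine ⟨T.mem_edgeSet.mp (by rw [← huv]; exact hdT), ?_⟩
        rw [Set.mem_singleton_iff, ← huv]
        exact hdne
      refine ⟨s(⟨u, hu⟩, ⟨v, hv⟩), ?_, ?_⟩
      · rw [SimpleGraph.mem_edgeFinset, SimpleGraph.mem_edgeSet]
        exact hGuv
      · rw [Equiv.symm_apply_eq]
        apply Subtype.ext
        show Sym2.map Subtype.val s(⟨u, hu⟩, ⟨v, hv⟩) = (ℓ i' : Sym2 (Fin (n + 1)))
        rw [Sym2.map_pair_eq]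
        exact huv.symm
  have rowsum : ∀ i' : Fin n, ∑ v, A i' v = (n : ℝ) + 1 := by
    intro i'
    have h0 := hA.1.2.2 i'
    push_cast at h0
    exact h0
  have colsum : ∀ v, ∑ i', A i' v = (n : ℝ) := hA.1.2.1
  have hrowi : ∑ v ∈ S.toFinset, A i v = A i j := by
    refine Finset.sum_eq_single_of_mem j (Set.mem_toFinset.mpr hjS) ?_
    intro v hvS hvj
    by_contra hAv
    have hvmem : v ∈ e := hsupp0 i v hAv
    rw [← hjk, Sym2.mem_iff] at hvmem
    rcases hvmem with rfl | rfl
    · exact hvj rfl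
    · exact hkS (Set.mem_toFinset.mp hvS)
  have hrowP : ∀ i' ∈ P, ∑ v ∈ S.toFinset, A i' v = (n : ℝ) + 1 := by
    intro i' hi'
    rw [hP, Finset.mem_filter] at hi'
    rw [← rowsum i']
    refine Finset.sum_subset (Finset.subset_univ _) ?_
    intro v _ hvS
    by_contra hAv
    exact hvS (Set.mem_toFinset.mpr (hi'.2 v (hsupp0 i' v hAv)))
  have hrowO : ∀ i' ∈ Finset.univ.erase i, i' ∉ P → ∑ v ∈ S.toFinset, A i' v = 0 := by
    intro i' hie hiP
    refine Finset.sum_eq_zero ?_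
    intro v hvS
    by_contra hAv
    apply hiP
    rw [hP, Finset.mem_filter]
    exact ⟨hie, hQ i' (Finset.ne_of_mem_erase hie) v (Set.mem_toFinset.mp hvS) hAv⟩
  have key : (n : ℝ) * S.toFinset.card = A i j + ((n : ℝ) + 1) * P.card := by
    have h1 : (n : ℝ) * S.toFinset.card = ∑ v ∈ S.toFinset, ∑ i', A i' v := by
      rw [Finset.sum_congr rfl (fun v _ => colsum v), Finset.sum_const, nsmul_eq_mul, mul_comm]
    have h2 : ∑ i' ∈ Finset.univ.erase i, ∑ v ∈ S.toFinset, A i' v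
        = ((n : ℝ) + 1) * P.card := by
      rw [← Finset.sum_filter_add_sum_filter_not (Finset.univ.erase i)
          (fun i' => ∀ x ∈ (ℓ i' : Sym2 (Fin (n + 1))), x ∈ S)]
      have e1 : ∑ i' ∈ (Finset.univ.erase i).filter
          (fun i' => ∀ x ∈ (ℓ i' : Sym2 (Fin (n + 1))), x ∈ S),
          ∑ v ∈ S.toFinset, A i' v = ((n : ℝ) + 1) * P.card := by
        rw [← hP, Finset.sum_congr rfl hrowP, Finset.sum_const, nsmul_eq_mul, mul_comm]
      have e2 : ∑ i' ∈ (Finset.univ.erase i).filter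
          (fun i' => ¬ ∀ x ∈ (ℓ i' : Sym2 (Fin (n + 1))), x ∈ S),
          ∑ v ∈ S.toFinset, A i' v = 0 := by
        refine Finset.sum_eq_zero ?_
        intro i' hi'
        rw [Finset.mem_filter] at hi'
        refine hrowO i' hi'.1 ?_
        rw [hP, Finset.mem_filter]
        tauto
      rw [e1, e2, add_zero]
    rw [h1, Finset.sum_comm, ← Finset.add_sum_erase Finset.univ _ (Finset.mem_univ i),
      hrowi, h2]
  have hPcS : P.card + 1 = S.toFinset.card := by
    rw [← hbij, hcard]
    exact (Set.toFinset_card S).symm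
  have hcompl : S.toFinset.card + ({v : Fin (n + 1) | ¬ G.Reachable j v}).ncard = n + 1 := by
    have h1 : ({v : Fin (n + 1) | ¬ G.Reachable j v}) = Sᶜ := by
      ext v
      simp [hSdef]
    rw [h1, ← Set.ncard_eq_toFinset_card' S, Set.ncard_add_ncard_compl S (Set.toFinite S)]
    simp
  have hc1 : (P.card : ℝ) + 1 = (S.toFinset.card : ℝ) := by exact_mod_cast hPcS
  have hc2 : (S.toFinset.card : ℝ)
      + (({v : Fin (n + 1) | ¬ G.Reachable j v}).ncard : ℝ) = (n : ℝ) + 1 := by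
    exact_mod_cast hcompl
  linear_combination (-1 : ℝ) * key - ((n : ℝ) + 1) * hc1 - hc2
end

section
/- Let n and m be positive integers, let Z_{nm} denote the additive group of residues modulo n·m, let χ_k denote the indicator function of the image of {0, 1, …, k−1} in Z_{nm}, and define τ : Z_{nm} → ℝ by τ(t) = Σ_{s ∈ Z_{nm}} χ_n(t−s)·χ_m(s). Then: (1) τ(t) = min{t+1, n+m−t−1, n, m} for 0 ≤ t ≤ n+m−2 and τ(t) = 0 for n+m−1 ≤ t ≤ nm−1 (where t denotes the residue of the integer t); and (2) for every t ∈ Z_{nm}, Σ_{s ∈ H_n} τ(t−s) = m and Σ_{s ∈ H_m} τ(t−s) = n, where H_k denotes the cyclic subgroup of Z_{nm} generated by the residue of k. -/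
/-!
Writing `1_k` for the indicator of `{0, …, k - 1}` in `ℤ/Nℤ`, `τ = 1_n ∗ 1_m` counts the pairs
`a < n`, `b < m` with `a + b ≡ t`. Since `n + m - 2 < nm`, for `t < nm` the congruence is an
equality of natural numbers, so `τ t` is the length of the interval `t + 1 - n ≤ b ≤ min t (m - 1)`.
The translates of `{0, …, n - 1}` by the subgroup `nℤ/nmℤ` partition `ℤ/nmℤ` (division with
remainder by `n`), so summing `τ = 1_n ∗ 1_m` over such a coset gives `∑ 1_m = m`; by
commutativity of convolution the same argument applies with `n` and `m` exchanged.
-/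

open Finset

section Convolution

variable {G : Type*} [AddCommGroup G] [Fintype G]

def discreteConv (f g : G → ℝ) (t : G) : ℝ := ∑ s, f (t - s) * g s

theorem discreteConv_comm (f g : G → ℝ) : discreteConv f g = discreteConv g f := by
  funext t
  refine Fintype.sum_equiv (Equiv.subLeft t) _ _ fun s => ?_
  simp only [Equiv.subLeft_apply, sub_sub_cancel, mul_comm]

theorem sum_discreteConv_sub_of_sum_sub_eq_one {f : G → ℝ} {H : Finset G}
    (hf : ∀ x, ∑ s ∈ H, f (x - s) = 1) (g : G → ℝ) (t : G) :
    ∑ s ∈ H, discreteConv f g (t - s) = ∑ u, g u := by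
  simp only [discreteConv]
  rw [sum_comm]
  refine sum_congr rfl fun u _ => ?_
  simp_rw [← sum_mul, sub_right_comm t _ u, hf, one_mul]

theorem discreteConv_boole [DecidableEq G] (A B : Finset G) (t : G) :
    discreteConv (fun x => if x ∈ A then 1 else 0) (fun x => if x ∈ B then 1 else 0) t =
      #{b ∈ B | t - b ∈ A} := by
  simp only [discreteConv, ite_zero_mul_ite_zero, mul_one]
  rw [sum_boole]
  congr 2
  ext b
  simp [and_comm]

end Convolution

namespace ZMod

def castRange (N k : ℕ) : Finset (ZMod N) := (range k).image (↑)

theorem mem_castRange {N k : ℕ} {x : ZMod N} : x ∈ castRange N k ↔ ∃ a < k, (a : ZMod N) = x := by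
  simp [castRange]

theorem card_castRange {N k : ℕ} [NeZero N] (hk : k ≤ N) : #(castRange N k) = k := by
  rw [castRange, card_image_of_injOn, card_range]
  exact (CharP.natCast_injOn_Iio (ZMod N) N).mono fun a ha => by simp at ha ⊢; omega

theorem sum_boole_castRange {N k : ℕ} [NeZero N] (hk : k ≤ N) :
    ∑ x : ZMod N, (if x ∈ castRange N k then 1 else 0 : ℝ) = k := by
  rw [Fintype.sum_ite_mem, sum_const, card_castRange hk, nsmul_one]

theorem natCast_sub_mem_castRange_iff {N n m t b : ℕ} (hnm : n + m ≤ N + 1) (ht : t < N)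
    (hb : b < m) : (t : ZMod N) - b ∈ castRange N n ↔ b ≤ t ∧ t < n + b := by
  rw [mem_castRange]
  constructor
  · rintro ⟨a, ha, hab⟩
    have : a + b = t := CharP.natCast_injOn_Iio (ZMod N) N (by simp; omega) (by simpa using ht)
      (by push_cast; rw [hab, sub_add_cancel])
    omega
  · rintro ⟨hbt, htb⟩
    exact ⟨t - b, by omega, by rw [Nat.cast_sub hbt]⟩

theorem discreteConv_castRange_natCast {N n m t : ℕ} [NeZero N] (hn : 0 < n)
    (hnm : n + m ≤ N + 1) (ht : t < N) :
    discreteConv (fun x => if x ∈ castRange N n then 1 else 0)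
      (fun x => if x ∈ castRange N m then 1 else 0) (t : ZMod N) =
      ((min (t + 1) m - (t + 1 - n) : ℕ) : ℝ) := by
  have hinj : Set.InjOn (Nat.cast : ℕ → ZMod N) (range m) :=
    (CharP.natCast_injOn_Iio (ZMod N) N).mono fun a ha => by simp at ha ⊢; omega
  have hfilter : (range m).filter (fun b : ℕ => (t : ZMod N) - b ∈ castRange N n) =
      Ico (t + 1 - n) (min (t + 1) m) := by
    ext b
    simp only [mem_filter, mem_range, mem_Ico]
    constructor
    · rintro ⟨hb, h⟩
      have := (natCast_sub_mem_castRange_iff hnm ht hb).1 h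
      omega
    · rintro ⟨h1, h2⟩
      have hb : b < m := by omega
      exact ⟨hb, (natCast_sub_mem_castRange_iff hnm ht hb).2 (by omega)⟩
  rw [discreteConv_boole, show castRange N m = (range m).image (↑) from rfl, filter_image,
    card_image_of_injOn (hinj.mono (filter_subset _ _)), hfilter, Nat.card_Ico]

theorem eq_of_natCast_sub_mem_zmultiples {N a c c' : ℕ} (haN : a ∣ N) (hc : c < a) (hc' : c' < a)
    (h : (c : ZMod N) - c' ∈ AddSubgroup.zmultiples (a : ZMod N)) : c = c' := by
  obtain ⟨k, hk⟩ := h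
  have hcast := congrArg (castHom haN (ZMod a)) hk
  simp only [map_zsmul, map_natCast, map_sub, natCast_self, smul_zero] at hcast
  exact CharP.natCast_injOn_Iio (ZMod a) a hc hc' (sub_eq_zero.1 hcast.symm)

open Classical in
theorem sum_boole_castRange_sub_zmultiples {N a : ℕ} [NeZero N] (haN : a ∣ N) (x : ZMod N) :
    ∑ s ∈ (AddSubgroup.zmultiples (a : ZMod N) : Set (ZMod N)).toFinset,
      (if x - s ∈ castRange N a then 1 else 0 : ℝ) = 1 := by
  have ha : 0 < a := Nat.pos_of_dvd_of_pos haN (NeZero.pos N)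
  set s₀ : ZMod N := ((x.val / a * a : ℕ) : ZMod N)
  have hs₀ : s₀ ∈ AddSubgroup.zmultiples (a : ZMod N) := by
    simp only [s₀, Nat.cast_mul, ← nsmul_eq_mul]
    exact AddSubgroup.nsmul_mem_zmultiples _ _
  have hx : x - s₀ = ((x.val % a : ℕ) : ZMod N) := by
    rw [sub_eq_iff_eq_add, ← Nat.cast_add, Nat.mod_add_div', natCast_zmod_val]
  rw [sum_eq_single_of_mem s₀ (Set.mem_toFinset.2 hs₀),
    if_pos (mem_castRange.2 ⟨_, Nat.mod_lt _ ha, hx.symm⟩)]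
  intro s hs hne
  refine if_neg fun hxs => hne ?_
  obtain ⟨c, hc, hcx⟩ := mem_castRange.1 hxs
  have hc_eq : c = x.val % a := eq_of_natCast_sub_mem_zmultiples haN hc (Nat.mod_lt _ ha) <| by
    rw [hcx, ← hx, sub_sub_sub_cancel_left]
    exact sub_mem hs₀ (Set.mem_toFinset.1 hs)
  exact sub_right_injective (hcx.symm.trans (hc_eq ▸ hx.symm))

end ZMod

open Classical in
/-- Properties of the discrete trapezoid function
`τ = χ_n ∗ χ_m` on `Z_{nm}`: its explicit values, and the fact that it tiles
`Z_{nm}` by translations along the subgroups generated by `n` and by `m`. -/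
theorem discrete_trapezoid (n m : ℕ) (hn : 0 < n) (hm : 0 < m) [NeZero (n * m)]
    (χ : ℕ → ZMod (n * m) → ℝ)
    (hχ : ∀ k t, χ k t = if ∃ a : ℕ, a < k ∧ (a : ZMod (n * m)) = t then 1 else 0)
    (τ : ZMod (n * m) → ℝ)
    (hτ : ∀ t, τ t = ∑ s : ZMod (n * m), χ n (t - s) * χ m s) :
    ((∀ t : ℕ, t ≤ n + m - 2 →
        τ (t : ZMod (n * m)) = ((min (min (t + 1) (n + m - t - 1)) (min n m) : ℕ) : ℝ)) ∧
      (∀ t : ℕ, n + m - 1 ≤ t → t ≤ n * m - 1 → τ (t : ZMod (n * m)) = 0)) ∧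
    (∀ t : ZMod (n * m),
      (∑ s ∈ ((AddSubgroup.zmultiples ((n : ZMod (n * m)))) : Set (ZMod (n * m))).toFinset,
        τ (t - s)) = (m : ℝ) ∧
      (∑ s ∈ ((AddSubgroup.zmultiples ((m : ZMod (n * m)))) : Set (ZMod (n * m))).toFinset,
        τ (t - s)) = (n : ℝ)) := by
  have hχ_castRange : ∀ k, χ k = fun x => if x ∈ ZMod.castRange (n * m) k then 1 else 0 :=
    fun k => funext fun x => by simp only [hχ, ZMod.mem_castRange]
  have hτ_conv : τ = discreteConv (χ n) (χ m) := funext hτ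
  have hnm : n + m ≤ n * m + 1 := by nlinarith
  have hvalue : ∀ t < n * m, τ t = ((min (t + 1) m - (t + 1 - n) : ℕ) : ℝ) := fun t ht => by
    rw [hτ_conv, hχ_castRange, hχ_castRange, ZMod.discreteConv_castRange_natCast hn hnm ht]
  refine ⟨⟨fun t ht => ?_, fun t ht ht' => ?_⟩, fun t => ⟨?_, ?_⟩⟩
  · rw [hvalue t (by omega)]
    congr 1
    omega
  · rw [hvalue t (by omega), Nat.cast_eq_zero]
    omega
  · rw [hτ_conv, hχ_castRange n, sum_discreteConv_sub_of_sum_sub_eq_one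
      (ZMod.sum_boole_castRange_sub_zmultiples (dvd_mul_right n m)), hχ_castRange,
      ZMod.sum_boole_castRange (Nat.le_mul_of_pos_left m hn)]
  · rw [hτ_conv, discreteConv_comm, hχ_castRange m, sum_discreteConv_sub_of_sum_sub_eq_one
      (ZMod.sum_boole_castRange_sub_zmultiples (dvd_mul_left m n)), hχ_castRange,
      ZMod.sum_boole_castRange (Nat.le_mul_of_pos_right n hm)]
end

section
/- Let G be a finite abelian group which is the internal direct sum of two subgroups H₁ and H₂ of orders n and m respectively. If f : G → ℂ satisfies Σ_{s ∈ H₁} f(t−s) = n and Σ_{s ∈ H₂} f(t−s) = m for every t ∈ G, then the support of f has size at least n + m − gcd(n, m); moreover, there exists a nonnegative real-valued function f satisfying these two tiling conditions whose support has size exactly n + m − gcd(n, m). -/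
set_option linter.unusedSectionVars false
set_option linter.unusedVariables false
set_option maxHeartbeats 1000000

namespace TilingAux

open Finset

variable {A B : Type*} [Fintype A] [Fintype B] [DecidableEq A] [DecidableEq B]

/-- rows touched by a set of cells -/
def rset (T : Finset (A × B)) : Finset A := T.image Prod.fst
/-- columns touched by a set of cells -/
def cset (T : Finset (A × B)) : Finset B := T.image Prod.snd

open Classical in
/-- one step of component growth inside `S` -/
noncomputable def nxt (S T : Finset (A × B)) : Finset (A × B) :=
  T ∪ S.filter (fun q => ∃ p ∈ T, p.1 = q.1 ∨ p.2 = q.2)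

lemma subset_nxt (S T : Finset (A × B)) : T ⊆ nxt S T := Finset.subset_union_left

lemma tree_bound (S : Finset (A × B)) (p₀ : A × B) :
    ∀ k : ℕ, (rset ((nxt S)^[k] {p₀})).card + (cset ((nxt S)^[k] {p₀})).card
      ≤ ((nxt S)^[k] {p₀}).card + 1 := by
  intro k
  induction k with
  | zero => simp [rset, cset]
  | succ k ih =>
      set T := (nxt S)^[k] {p₀} with hT
      rw [Function.iterate_succ_apply', ← hT]
      set T' := nxt S T with hT'
      have hTT' : T ⊆ T' := subset_nxt _ _
      have hsplit : T' = T ∪ (T' \ T) := by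
        rw [Finset.union_sdiff_of_subset hTT']
      set D := T' \ T with hD
      have hr : rset T' = rset T ∪ rset D := by
        rw [hsplit, rset, rset, rset, Finset.image_union]
      have hc : cset T' = cset T ∪ cset D := by
        rw [hsplit, cset, cset, cset, Finset.image_union]
      set X := rset D \ rset T with hX
      set Y := cset D \ cset T with hY
      have hrcard : (rset T').card ≤ (rset T).card + X.card := by
        rw [hr]
        calc (rset T ∪ rset D).card = (rset T ∪ X).card := by
              rw [hX, Finset.union_sdiff_self_eq_union]
          _ ≤ (rset T).card + X.card := Finset.card_union_le _ _
      have hccard : (cset T').card ≤ (cset T).card + Y.card := by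
        rw [hc]
        calc (cset T ∪ cset D).card = (cset T ∪ Y).card := by
              rw [hY, Finset.union_sdiff_self_eq_union]
          _ ≤ (cset T).card + Y.card := Finset.card_union_le _ _
      classical
      set D₁ := D.filter (fun q => q.1 ∈ X) with hD₁
      set D₂ := D.filter (fun q => q.2 ∈ Y) with hD₂
      have hX1 : X ⊆ rset D₁ := by
        intro a ha
        have haD : a ∈ rset D := (Finset.mem_sdiff.mp ha).1
        obtain ⟨q, hq, hq1⟩ := Finset.mem_image.mp haD
        exact Finset.mem_image.mpr ⟨q, Finset.mem_filter.mpr ⟨hq, by rw [hq1]; exact ha⟩, hq1⟩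
      have hY1 : Y ⊆ cset D₂ := by
        intro b hb
        have hbD : b ∈ cset D := (Finset.mem_sdiff.mp hb).1
        obtain ⟨q, hq, hq2⟩ := Finset.mem_image.mp hbD
        exact Finset.mem_image.mpr ⟨q, Finset.mem_filter.mpr ⟨hq, by rw [hq2]; exact hb⟩, hq2⟩
      have hdisj : Disjoint D₁ D₂ := by
        rw [Finset.disjoint_left]
        intro q hq1 hq2
        have hq1' := Finset.mem_filter.mp hq1
        have hq2' := Finset.mem_filter.mp hq2
        have hqD : q ∈ D := hq1'.1
        have : q ∈ S.filter (fun q => ∃ p ∈ T, p.1 = q.1 ∨ p.2 = q.2) := by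
          have := Finset.mem_sdiff.mp hqD
          rcases Finset.mem_union.mp (hT' ▸ this.1) with h | h
          · exact absurd h this.2
          · exact h
        obtain ⟨p, hp, hpq⟩ := (Finset.mem_filter.mp this).2
        rcases hpq with h | h
        · have : q.1 ∈ rset T := Finset.mem_image.mpr ⟨p, hp, h⟩
          exact (Finset.mem_sdiff.mp hq1'.2).2 this
        · have : q.2 ∈ cset T := Finset.mem_image.mpr ⟨p, hp, h⟩
          exact (Finset.mem_sdiff.mp hq2'.2).2 this
      have hXY : X.card + Y.card ≤ D.card := by
        calc X.card + Y.card ≤ (rset D₁).card + (cset D₂).card :=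
              Nat.add_le_add (Finset.card_le_card hX1) (Finset.card_le_card hY1)
          _ ≤ D₁.card + D₂.card :=
              Nat.add_le_add (Finset.card_image_le) (Finset.card_image_le)
          _ = (D₁ ∪ D₂).card := (Finset.card_union_of_disjoint hdisj).symm
          _ ≤ D.card := Finset.card_le_card (Finset.union_subset
              (Finset.filter_subset _ _) (Finset.filter_subset _ _))
      have hcardT' : T'.card = T.card + D.card := by
        rw [hsplit, Finset.card_union_of_disjoint Finset.sdiff_disjoint.symm]
      omega

/-- the step relation on cells of `S` -/
def stp (S : Finset (A × B)) (x y : A × B) : Prop :=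
  x ∈ S ∧ y ∈ S ∧ (x.1 = y.1 ∨ x.2 = y.2)

lemma stp_symm (S : Finset (A × B)) : Symmetric (stp S) := by
  intro x y ⟨hx, hy, h⟩
  exact ⟨hy, hx, by tauto⟩

open Classical in
/-- connected component of `p₀` inside `S` -/
noncomputable def comp (S : Finset (A × B)) (p₀ : A × B) : Finset (A × B) :=
  S.filter (fun q => Relation.ReflTransGen (stp S) p₀ q)

lemma mem_comp {S : Finset (A × B)} {p₀ q : A × B} :
    q ∈ comp S p₀ ↔ q ∈ S ∧ Relation.ReflTransGen (stp S) p₀ q := by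
  classical
  simp [comp]

lemma self_mem_comp {S : Finset (A × B)} {p₀ : A × B} (h : p₀ ∈ S) : p₀ ∈ comp S p₀ :=
  mem_comp.mpr ⟨h, .refl⟩

lemma comp_subset {S : Finset (A × B)} {p₀ : A × B} : comp S p₀ ⊆ S := by
  intro x hx; exact (mem_comp.mp hx).1

lemma comp_eq_of_mem {S : Finset (A × B)} {p q : A × B} (hq : q ∈ comp S p) :
    comp S q = comp S p := by
  obtain ⟨hqS, hpq⟩ := mem_comp.mp hq
  ext x
  simp only [mem_comp]
  constructor
  · rintro ⟨hx, hqx⟩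
    exact ⟨hx, hpq.trans hqx⟩
  · rintro ⟨hx, hpx⟩
    exact ⟨hx, ((@Relation.ReflTransGen.symmetric _ _ ⟨fun a b h => stp_symm S h⟩).symm _ _ hpq).trans hpx⟩

lemma iter_subset_comp (S : Finset (A × B)) {p₀ : A × B} (h : p₀ ∈ S) :
    ∀ k, (nxt S)^[k] {p₀} ⊆ comp S p₀ := by
  intro k
  induction k with
  | zero => simp only [Function.iterate_zero, id_eq, Finset.singleton_subset_iff]
            exact self_mem_comp h
  | succ k ih =>
      rw [Function.iterate_succ_apply']
      intro q hq
      rcases Finset.mem_union.mp hq with h' | h'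
      · exact ih h'
      · classical
        have h'' := Finset.mem_filter.mp h'
        have hqS := h''.1
        obtain ⟨p, hpT, hpq⟩ : ∃ p ∈ (nxt S)^[k] {p₀}, p.1 = q.1 ∨ p.2 = q.2 := by
          simpa using h''.2
        have hpC := ih hpT
        obtain ⟨hpS, hp₀p⟩ := mem_comp.mp hpC
        exact mem_comp.mpr ⟨hqS, hp₀p.tail ⟨hpS, hqS, hpq⟩⟩

lemma comp_subset_iter (S : Finset (A × B)) {p₀ : A × B} (h : p₀ ∈ S) :
    ∃ k, comp S p₀ ⊆ (nxt S)^[k] {p₀} := by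
  classical
  have key : ∀ q ∈ comp S p₀, ∃ k, q ∈ (nxt S)^[k] {p₀} := by
    intro q hq
    obtain ⟨hqS, hr⟩ := mem_comp.mp hq
    clear hq hqS
    induction hr with
    | refl => exact ⟨0, by simp⟩
    | tail hxy hstep ih =>
        obtain ⟨k, hk⟩ := ih
        refine ⟨k + 1, ?_⟩
        rw [Function.iterate_succ_apply']
        refine Finset.mem_union_right _ (Finset.mem_filter.mpr ⟨hstep.2.1, ?_⟩)
        exact ⟨_, hk, hstep.2.2⟩
  set F : A × B → ℕ := fun q => if hq : ∃ k, q ∈ (nxt S)^[k] {p₀} then Nat.find hq else 0 with hF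
  refine ⟨(comp S p₀).sup F, fun q hq => ?_⟩
  obtain ⟨k, hk⟩ := key q hq
  have hex : ∃ j, q ∈ (nxt S)^[j] {p₀} := ⟨k, hk⟩
  have h1 : q ∈ (nxt S)^[F q] {p₀} := by
    simp only [hF, dif_pos hex]
    exact Nat.find_spec hex
  have mono : ∀ {j k : ℕ}, j ≤ k → (nxt S)^[j] ({p₀} : Finset (A × B)) ⊆ (nxt S)^[k] {p₀} := by
    intro j k h
    induction h with
    | refl => exact Finset.Subset.refl _
    | step _ ih => refine ih.trans ?_; rw [Function.iterate_succ_apply']; exact subset_nxt _ _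
  exact mono (Finset.le_sup hq) h1

lemma comp_card_bound {S : Finset (A × B)} {p₀ : A × B} (h : p₀ ∈ S) :
    (rset (comp S p₀)).card + (cset (comp S p₀)).card ≤ (comp S p₀).card + 1 := by
  obtain ⟨k, hk⟩ := comp_subset_iter S h
  have heq : comp S p₀ = (nxt S)^[k] {p₀} :=
    Finset.Subset.antisymm hk (iter_subset_comp S h k)
  rw [heq]
  exact tree_bound S p₀ k

lemma mem_comp_of_row {S : Finset (A × B)} {p q : A × B} (hq : q ∈ S)
    (h : q.1 ∈ rset (comp S p)) : q ∈ comp S p := by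
  obtain ⟨x, hx, hx1⟩ := Finset.mem_image.mp h
  obtain ⟨hxS, hpx⟩ := mem_comp.mp hx
  exact mem_comp.mpr ⟨hq, hpx.tail ⟨hxS, hq, Or.inl hx1⟩⟩

lemma mem_comp_of_col {S : Finset (A × B)} {p q : A × B} (hq : q ∈ S)
    (h : q.2 ∈ cset (comp S p)) : q ∈ comp S p := by
  obtain ⟨x, hx, hx2⟩ := Finset.mem_image.mp h
  obtain ⟨hxS, hpx⟩ := mem_comp.mp hx
  exact mem_comp.mpr ⟨hq, hpx.tail ⟨hxS, hq, Or.inr hx2⟩⟩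

/-- Main combinatorial bound: a complex matrix on `A × B` having all column sums
equal to `|A|` and all row sums equal to `|B|` has at least `|A| + |B| - gcd`
nonzero entries. -/
lemma matrix_bound (M : A → B → ℂ) (n m : ℕ)
    (hA : Fintype.card A = n) (hB : Fintype.card B = m)
    (hn0 : 0 < n) (hm0 : 0 < m)
    (hcol : ∀ b, ∑ a, M a b = (n : ℂ))
    (hrow : ∀ a, ∑ b, M a b = (m : ℂ)) :
    n + m ≤ (Finset.univ.filter (fun p : A × B => M p.1 p.2 ≠ 0)).card + Nat.gcd n m := by
  classical
  set S : Finset (A × B) := Finset.univ.filter (fun p : A × B => M p.1 p.2 ≠ 0) with hS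
  have mem_S : ∀ {p : A × B}, p ∈ S ↔ M p.1 p.2 ≠ 0 := by
    intro p; simp [hS]
  set comps : Finset (Finset (A × B)) := S.image (comp S) with hcomps
  have hTform : ∀ T ∈ comps, ∃ p ∈ S, comp S p = T := by
    intro T hT; simpa [hcomps] using hT
  have hsum : ∀ T ∈ comps,
      (rset T).card * m = (cset T).card * n := by
    intro T hT
    obtain ⟨p, hpS, rfl⟩ := hTform T hT
    set T := comp S p
    have hrowsum : ((rset T).card * m : ℂ) = ∑ q ∈ T, M q.1 q.2 := by
      have h1 : ∑ a ∈ rset T, ∑ b : B, M a b = ((rset T).card * m : ℂ) := by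
        rw [Finset.sum_congr rfl (fun a _ => hrow a), Finset.sum_const, nsmul_eq_mul]
      have h2 : ∑ q ∈ (rset T) ×ˢ (Finset.univ : Finset B), M q.1 q.2
          = ∑ a ∈ rset T, ∑ b : B, M a b := Finset.sum_product _ _ _
      rw [← h1, ← h2]
      symm
      apply Finset.sum_subset
      · intro q hq
        exact Finset.mem_product.mpr ⟨Finset.mem_image.mpr ⟨q, hq, rfl⟩, Finset.mem_univ _⟩
      · intro q hq hqT
        by_contra hne
        exact hqT (mem_comp_of_row (mem_S.mpr hne) (Finset.mem_product.mp hq).1)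
    have hcolsum : ((cset T).card * n : ℂ) = ∑ q ∈ T, M q.1 q.2 := by
      have h1 : ∑ b ∈ cset T, ∑ a : A, M a b = ((cset T).card * n : ℂ) := by
        rw [Finset.sum_congr rfl (fun b _ => hcol b), Finset.sum_const, nsmul_eq_mul]
      have h2 : ∑ q ∈ (cset T) ×ˢ (Finset.univ : Finset A), M q.2 q.1
          = ∑ b ∈ cset T, ∑ a : A, M a b := Finset.sum_product _ _ _
      rw [← h1, ← h2]
      symm
      have h3 : ∑ q ∈ T, M q.1 q.2 = ∑ q ∈ T.image Prod.swap, M q.2 q.1 := by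
        rw [Finset.sum_image]
        · simp
        · intro x _ y _ hxy
          exact Prod.swap_injective hxy
      rw [h3]
      apply Finset.sum_subset
      · intro q hq
        obtain ⟨x, hx, rfl⟩ := Finset.mem_image.mp hq
        exact Finset.mem_product.mpr
          ⟨Finset.mem_image.mpr ⟨x, hx, rfl⟩, Finset.mem_univ _⟩
      · intro q hq hqT
        by_contra hne
        have hq2 : q.1 ∈ cset T := (Finset.mem_product.mp hq).1
        have : q.swap ∈ T :=
          mem_comp_of_col (mem_S.mpr (by simpa using hne)) (by simpa using hq2)
        exact hqT (Finset.mem_image.mpr ⟨q.swap, this, by simp⟩)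
    have := hrowsum.trans hcolsum.symm
    exact_mod_cast this
  have hScard : S.card = ∑ T ∈ comps, T.card := by
    rw [Finset.card_eq_sum_card_fiberwise (f := comp S) (t := comps)
      (fun q hq => Finset.mem_image.mpr ⟨q, hq, rfl⟩)]
    apply Finset.sum_congr rfl
    intro T hT
    congr 1
    obtain ⟨p, hpS, rfl⟩ := hTform T hT
    ext q
    simp only [Finset.mem_filter]
    constructor
    · rintro ⟨hqS, hq⟩
      rw [← hq]; exact self_mem_comp hqS
    · intro hq
      exact ⟨comp_subset hq, comp_eq_of_mem hq⟩
  have hrowpart : Finset.univ = comps.biUnion rset := by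
    apply Finset.eq_of_subset_of_card_le
    · intro a _
      have : ∑ b : B, M a b ≠ 0 := by
        rw [hrow a]
        exact_mod_cast hm0.ne'
      obtain ⟨b, _, hb⟩ := Finset.exists_ne_zero_of_sum_ne_zero this
      have hq : (a, b) ∈ S := mem_S.mpr hb
      refine Finset.mem_biUnion.mpr ⟨comp S (a, b), Finset.mem_image.mpr ⟨_, hq, rfl⟩, ?_⟩
      exact Finset.mem_image.mpr ⟨(a, b), self_mem_comp hq, rfl⟩
    · exact Finset.card_le_card (Finset.subset_univ _)
  have hrdisj : ∀ T₁ ∈ comps, ∀ T₂ ∈ comps, T₁ ≠ T₂ → Disjoint (rset T₁) (rset T₂) := by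
    intro T₁ hT₁ T₂ hT₂ hne
    obtain ⟨p₁, hp₁, rfl⟩ := hTform T₁ hT₁
    obtain ⟨p₂, hp₂, rfl⟩ := hTform T₂ hT₂
    rw [Finset.disjoint_left]
    intro a ha₁ ha₂
    obtain ⟨q, hq, hq1⟩ := Finset.mem_image.mp ha₂
    have : q ∈ comp S p₁ := mem_comp_of_row (comp_subset hq) (hq1 ▸ ha₁)
    exact hne ((comp_eq_of_mem this).symm.trans (comp_eq_of_mem hq))
  have hcdisj : ∀ T₁ ∈ comps, ∀ T₂ ∈ comps, T₁ ≠ T₂ → Disjoint (cset T₁) (cset T₂) := by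
    intro T₁ hT₁ T₂ hT₂ hne
    obtain ⟨p₁, hp₁, rfl⟩ := hTform T₁ hT₁
    obtain ⟨p₂, hp₂, rfl⟩ := hTform T₂ hT₂
    rw [Finset.disjoint_left]
    intro b hb₁ hb₂
    obtain ⟨q, hq, hq2⟩ := Finset.mem_image.mp hb₂
    have : q ∈ comp S p₁ := mem_comp_of_col (comp_subset hq) (hq2 ▸ hb₁)
    exact hne ((comp_eq_of_mem this).symm.trans (comp_eq_of_mem hq))
  have hcolpart : Finset.univ = comps.biUnion cset := by
    apply Finset.eq_of_subset_of_card_le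
    · intro b _
      have : ∑ a : A, M a b ≠ 0 := by
        rw [hcol b]
        exact_mod_cast hn0.ne'
      obtain ⟨a, _, ha⟩ := Finset.exists_ne_zero_of_sum_ne_zero this
      have hq : (a, b) ∈ S := mem_S.mpr ha
      refine Finset.mem_biUnion.mpr ⟨comp S (a, b), Finset.mem_image.mpr ⟨_, hq, rfl⟩, ?_⟩
      exact Finset.mem_image.mpr ⟨(a, b), self_mem_comp hq, rfl⟩
    · exact Finset.card_le_card (Finset.subset_univ _)
  have hrows : ∑ T ∈ comps, (rset T).card = n := by
    rw [← Finset.card_biUnion hrdisj, ← hrowpart, Finset.card_univ, hA]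
  have hcols : ∑ T ∈ comps, (cset T).card = m := by
    rw [← Finset.card_biUnion hcdisj, ← hcolpart, Finset.card_univ, hB]
  set g := Nat.gcd n m with hg
  have hg0 : 0 < g := Nat.gcd_pos_of_pos_left _ hn0
  set n' := n / g with hn'
  set m' := m / g with hm'
  have hnn' : n = g * n' := (Nat.mul_div_cancel' (Nat.gcd_dvd_left n m)).symm
  have hmm' : m = g * m' := (Nat.mul_div_cancel' (Nat.gcd_dvd_right n m)).symm
  have hcop : Nat.Coprime n' m' := Nat.coprime_div_gcd_div_gcd hg0
  have hn'0 : 0 < n' := by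
    rcases Nat.eq_zero_or_pos n' with h | h
    · rw [h, mul_zero] at hnn'; omega
    · exact h
  have hlow : ∀ T ∈ comps, n' ≤ (rset T).card := by
    intro T hT
    have h := hsum T hT
    have hne : (rset T).Nonempty := by
      obtain ⟨p, hpS, rfl⟩ := hTform T hT
      exact ⟨p.1, Finset.mem_image.mpr ⟨p, self_mem_comp hpS, rfl⟩⟩
    have hdvd : n' ∣ (rset T).card := by
      have h1 : (rset T).card * m' = (cset T).card * n' := by
        have h2 : (rset T).card * (g * m') = (cset T).card * (g * n') := by
          rw [← hmm', ← hnn', h]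
        rw [mul_comm g m', mul_comm g n', ← mul_assoc, ← mul_assoc] at h2
        exact Nat.eq_of_mul_eq_mul_right hg0 h2
      have hdd : n' ∣ (rset T).card * m' := Dvd.intro _ (by rw [h1, mul_comm])
      exact (Nat.Coprime.dvd_of_dvd_mul_right hcop hdd)
    exact Nat.le_of_dvd (Finset.card_pos.mpr hne) hdvd
  have hcompcard : comps.card ≤ g := by
    have h1 : comps.card * n' ≤ ∑ T ∈ comps, (rset T).card := by
      calc comps.card * n' = ∑ _T ∈ comps, n' := by rw [Finset.sum_const, smul_eq_mul]
        _ ≤ _ := Finset.sum_le_sum hlow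
    rw [hrows, hnn'] at h1
    exact Nat.le_of_mul_le_mul_right (by omega) hn'0
  have htree : ∀ T ∈ comps, (rset T).card + (cset T).card ≤ T.card + 1 := by
    intro T hT
    obtain ⟨p, hpS, rfl⟩ := hTform T hT
    exact comp_card_bound hpS
  calc n + m = ∑ T ∈ comps, ((rset T).card + (cset T).card) := by
        rw [Finset.sum_add_distrib, hrows, hcols]
    _ ≤ ∑ T ∈ comps, (T.card + 1) := Finset.sum_le_sum htree
    _ = S.card + comps.card := by
        rw [Finset.sum_add_distrib, ← hScard, Finset.sum_const, smul_eq_mul, mul_one]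
    _ ≤ S.card + g := by omega

/-! ### The staircase matrix -/

/-- the staircase (north-west corner rule) matrix entry -/
def NL (n m i j : ℕ) : ℕ := min ((i + 1) * m) ((j + 1) * n) - max (i * m) (j * n)

lemma NL_card (n m i j : ℕ) :
    NL n m i j = ((Finset.Ico (i * m) ((i + 1) * m)) ∩ (Finset.Ico (j * n) ((j + 1) * n))).card := by
  rw [Finset.Ico_inter_Ico, Nat.card_Ico, NL]

lemma NL_symm (n m i j : ℕ) : NL n m i j = NL m n j i := by
  rw [NL, NL, min_comm, max_comm]

lemma div_eq_iff_mem {n x j : ℕ} (hn : 0 < n) :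
    x / n = j ↔ j * n ≤ x ∧ x < (j + 1) * n := by
  constructor
  · rintro rfl
    refine ⟨Nat.div_mul_le_self x n, ?_⟩
    have h1 : n * (x / n) + x % n = x := Nat.div_add_mod x n
    have h2 : x % n < n := Nat.mod_lt x hn
    calc x = n * (x / n) + x % n := h1.symm
      _ < n * (x / n) + n := Nat.add_lt_add_left h2 _
      _ = (x / n + 1) * n := by ring
  · rintro ⟨h1, h2⟩
    exact Nat.div_eq_of_lt_le h1 h2

lemma NL_row_sum {n m : ℕ} (hn : 0 < n) (hm : 0 < m) {i : ℕ} (hi : i < n) :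
    ∑ j ∈ Finset.range m, NL n m i j = m := by
  classical
  have key : ∀ x ∈ Finset.Ico (i * m) ((i + 1) * m), x / n ∈ Finset.range m := by
    intro x hx
    have hx2 := (Finset.mem_Ico.mp hx).2
    have hxnm : x < m * n := by
      calc x < (i + 1) * m := hx2
        _ ≤ n * m := Nat.mul_le_mul_right m hi
        _ = m * n := Nat.mul_comm n m
    exact Finset.mem_range.mpr ((Nat.div_lt_iff_lt_mul hn).mpr hxnm)
  have hfib := Finset.card_eq_sum_card_fiberwise key
  have hcard : (Finset.Ico (i * m) ((i + 1) * m)).card = m := by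
    rw [Nat.card_Ico, add_one_mul, Nat.add_sub_cancel_left]
  have hstep : ∀ j ∈ Finset.range m, NL n m i j
      = ((Finset.Ico (i * m) ((i + 1) * m)).filter (fun x => x / n = j)).card := by
    intro j hj
    rw [NL_card]
    congr 1
    ext x
    simp only [Finset.mem_filter, Finset.mem_inter, Finset.mem_Ico]
    constructor
    · rintro ⟨hx, h1, h2⟩
      exact ⟨hx, (div_eq_iff_mem hn).mpr ⟨h1, h2⟩⟩
    · rintro ⟨hx, hdiv⟩
      have := (div_eq_iff_mem hn).mp hdiv
      exact ⟨hx, this.1, this.2⟩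
  calc ∑ j ∈ Finset.range m, NL n m i j
      = ∑ j ∈ Finset.range m,
        ((Finset.Ico (i * m) ((i + 1) * m)).filter (fun x => x / n = j)).card :=
        Finset.sum_congr rfl hstep
    _ = (Finset.Ico (i * m) ((i + 1) * m)).card := hfib.symm
    _ = m := hcard

lemma NL_col_sum {n m : ℕ} (hn : 0 < n) (hm : 0 < m) {j : ℕ} (hj : j < m) :
    ∑ i ∈ Finset.range n, NL n m i j = n := by
  simp only [NL_symm n m _ j]
  exact NL_row_sum hm hn hj

lemma NL_supp {n m : ℕ} (hn : 0 < n) (hm : 0 < m) :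
    ((Finset.univ : Finset (Fin n × Fin m)).filter
      (fun p => NL n m p.1 p.2 ≠ 0)).card + Nat.gcd n m ≤ n + m := by
  classical
  set U₁ : Finset ℕ := (Finset.range n).image (· * m) with hU₁
  set U₂ : Finset ℕ := (Finset.range m).image (· * n) with hU₂
  have hU₁card : U₁.card = n := by
    rw [hU₁, Finset.card_image_of_injective _ (mul_left_injective₀ hm.ne'), Finset.card_range]
  have hU₂card : U₂.card = m := by
    rw [hU₂, Finset.card_image_of_injective _ (mul_left_injective₀ hn.ne'), Finset.card_range]
  set T := U₁ ∪ U₂ with hT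
  -- every supported cell gives a strict overlap
  have hover : ∀ p : Fin n × Fin m, NL n m p.1 p.2 ≠ 0 →
      max ((p.1 : ℕ) * m) ((p.2 : ℕ) * n) < min (((p.1 : ℕ) + 1) * m) (((p.2 : ℕ) + 1) * n) := by
    intro p hp
    exact Nat.lt_of_sub_ne_zero hp
  -- the injection into T
  have hmaps : ∀ p ∈ (Finset.univ : Finset (Fin n × Fin m)).filter
      (fun p => NL n m p.1 p.2 ≠ 0),
      max ((p.1 : ℕ) * m) ((p.2 : ℕ) * n) ∈ T := by
    intro p hp
    rcases le_total ((p.1 : ℕ) * m) ((p.2 : ℕ) * n) with h | h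
    · rw [max_eq_right h]
      exact Finset.mem_union_right _
        (Finset.mem_image.mpr ⟨p.2, Finset.mem_range.mpr p.2.isLt, rfl⟩)
    · rw [max_eq_left h]
      exact Finset.mem_union_left _
        (Finset.mem_image.mpr ⟨p.1, Finset.mem_range.mpr p.1.isLt, rfl⟩)
  have hinj : Set.InjOn (fun p : Fin n × Fin m => max ((p.1 : ℕ) * m) ((p.2 : ℕ) * n))
      ((Finset.univ : Finset (Fin n × Fin m)).filter (fun p => NL n m p.1 p.2 ≠ 0)) := by
    intro p hp q hq hpq
    simp only [Finset.coe_filter, Set.mem_setOf_eq] at hp hq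
    have hp' := hover p hp.2
    have hq' := hover q hq.2
    set v := max ((p.1 : ℕ) * m) ((p.2 : ℕ) * n) with hv
    have hvq : v = max ((q.1 : ℕ) * m) ((q.2 : ℕ) * n) := hpq
    have e1 : v / m = (p.1 : ℕ) :=
      Nat.div_eq_of_lt_le (le_max_left _ _) (lt_of_lt_of_le hp' (min_le_left _ _))
    have e2 : v / n = (p.2 : ℕ) :=
      Nat.div_eq_of_lt_le (le_max_right _ _) (lt_of_lt_of_le hp' (min_le_right _ _))
    have e3 : v / m = (q.1 : ℕ) := by
      rw [hvq]
      exact Nat.div_eq_of_lt_le (le_max_left _ _) (lt_of_lt_of_le hq' (min_le_left _ _))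
    have e4 : v / n = (q.2 : ℕ) := by
      rw [hvq]
      exact Nat.div_eq_of_lt_le (le_max_right _ _) (lt_of_lt_of_le hq' (min_le_right _ _))
    have : (p.1 : ℕ) = (q.1 : ℕ) := by rw [← e1, e3]
    have h2 : (p.2 : ℕ) = (q.2 : ℕ) := by rw [← e2, e4]
    exact Prod.ext (Fin.val_injective this) (Fin.val_injective h2)
  have hcardle : ((Finset.univ : Finset (Fin n × Fin m)).filter
      (fun p => NL n m p.1 p.2 ≠ 0)).card ≤ T.card :=
    Finset.card_le_card_of_injOn _ hmaps hinj
  -- T has n + m - gcd elements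
  set L := Nat.lcm n m with hL
  have hL0 : 0 < L := Nat.lcm_pos hn hm
  have hgL : Nat.gcd n m * L = n * m := Nat.gcd_mul_lcm n m
  have hsub : (Finset.range (Nat.gcd n m)).image (· * L) ⊆ U₁ ∩ U₂ := by
    intro v hv
    obtain ⟨k, hk, rfl⟩ := Finset.mem_image.mp hv
    rw [Finset.mem_range] at hk
    have hmL : m ∣ L := Nat.dvd_lcm_right n m
    have hnL : n ∣ L := Nat.dvd_lcm_left n m
    have hvnm : k * L < n * m := by
      calc k * L < Nat.gcd n m * L := (Nat.mul_lt_mul_right hL0).mpr hk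
        _ = n * m := hgL
    refine Finset.mem_inter.mpr ⟨?_, ?_⟩
    · obtain ⟨c, hc⟩ := hmL
      refine Finset.mem_image.mpr ⟨k * c, Finset.mem_range.mpr ?_, by rw [hc]; ring⟩
      by_contra hcon
      push_neg at hcon
      have h1 : n * m ≤ k * c * m := Nat.mul_le_mul_right m hcon
      have h2 : k * c * m = k * L := by rw [hc]; ring
      rw [h2] at h1
      exact absurd h1 (not_le.mpr hvnm)
    · obtain ⟨c, hc⟩ := hnL
      refine Finset.mem_image.mpr ⟨k * c, Finset.mem_range.mpr ?_, by rw [hc]; ring⟩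
      by_contra hcon
      push_neg at hcon
      have h1 : m * n ≤ k * c * n := Nat.mul_le_mul_right n hcon
      have h2 : k * c * n = k * L := by rw [hc]; ring
      have h3 : n * m ≤ k * c * n := by rw [Nat.mul_comm n m]; exact h1
      rw [h2] at h3
      exact absurd h3 (not_le.mpr hvnm)
  have hintercard : Nat.gcd n m ≤ (U₁ ∩ U₂).card := by
    calc Nat.gcd n m = ((Finset.range (Nat.gcd n m)).image (· * L)).card := by
          rw [Finset.card_image_of_injective _ (mul_left_injective₀ hL0.ne'), Finset.card_range]
      _ ≤ (U₁ ∩ U₂).card := Finset.card_le_card hsub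
  have hTcard : T.card + (U₁ ∩ U₂).card = n + m := by
    rw [hT, Finset.card_union_add_card_inter, hU₁card, hU₂card]
  omega

end TilingAux

open Classical in
/-- If a finite abelian group `G` is the internal direct sum of
subgroups `H₁, H₂` of orders `n, m`, then every `f : G → ℂ` tiling `G` by
translations along both `H₁` (with level `n`) and `H₂` (with level `m`) has
support of size at least `n + m − gcd(n,m)`, and there is a nonnegative function
with these tiling properties whose support has size exactly `n + m − gcd(n,m)`. -/
theorem tiling_support_bound (G : Type*) [AddCommGroup G] [Fintype G]
    (H₁ H₂ : AddSubgroup G) (n m : ℕ) (hn : Nat.card H₁ = n) (hm : Nat.card H₂ = m)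
    (hdisj : H₁ ⊓ H₂ = ⊥) (hsum : H₁ ⊔ H₂ = ⊤) :
    (∀ f : G → ℂ,
      (∀ t : G, ∑ s ∈ (H₁ : Set G).toFinset, f (t - s) = (n : ℂ)) →
      (∀ t : G, ∑ s ∈ (H₂ : Set G).toFinset, f (t - s) = (m : ℂ)) →
      n + m - Nat.gcd n m ≤ ({t : G | f t ≠ 0}).ncard) ∧
    (∃ f : G → ℝ, (∀ t, 0 ≤ f t) ∧
      (∀ t : G, ∑ s ∈ (H₁ : Set G).toFinset, f (t - s) = (n : ℝ)) ∧
      (∀ t : G, ∑ s ∈ (H₂ : Set G).toFinset, f (t - s) = (m : ℝ)) ∧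
      ({t : G | f t ≠ 0}).ncard = n + m - Nat.gcd n m) := by
  classical
  have hn' : Fintype.card ↥H₁ = n := by rw [← Nat.card_eq_fintype_card]; exact hn
  have hm' : Fintype.card ↥H₂ = m := by rw [← Nat.card_eq_fintype_card]; exact hm
  have hn0 : 0 < n := by rw [← hn']; exact Fintype.card_pos
  have hm0 : 0 < m := by rw [← hm']; exact Fintype.card_pos
  -- the addition bijection
  set φ : ↥H₁ × ↥H₂ → G := fun p => (p.1 : G) + (p.2 : G) with hφ
  have hφinj : Function.Injective φ := by
    rintro ⟨a, b⟩ ⟨a', b'⟩ hab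
    simp only [hφ] at hab
    have hx : ((a : G) - a') = (b' : G) - b := by
      rw [sub_eq_sub_iff_add_eq_add]
      exact hab.trans (add_comm _ _)
    have hmem : ((a : G) - a') ∈ H₁ ⊓ H₂ := by
      refine AddSubgroup.mem_inf.mpr ⟨sub_mem a.2 a'.2, ?_⟩
      rw [hx]
      exact sub_mem b'.2 b.2
    rw [hdisj, AddSubgroup.mem_bot, sub_eq_zero] at hmem
    have hb : (b : G) = b' := by
      have : (a : G) = a' := hmem
      have h2 : (a : G) + b = a' + b' := hab
      rw [this] at h2
      exact add_left_cancel h2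
    exact Prod.ext (Subtype.ext hmem) (Subtype.ext hb)
  have hφsurj : Function.Surjective φ := by
    intro t
    have ht : t ∈ H₁ ⊔ H₂ := by rw [hsum]; trivial
    obtain ⟨y, hy, z, hz, hyz⟩ := AddSubgroup.mem_sup.mp ht
    exact ⟨(⟨y, hy⟩, ⟨z, hz⟩), hyz⟩
  set e : (↥H₁ × ↥H₂) ≃ G := Equiv.ofBijective φ ⟨hφinj, hφsurj⟩ with he
  have he_apply : ∀ p, e p = (p.1 : G) + (p.2 : G) := fun p => rfl
  -- reindexing the tiling sums
  have reindex₁ : ∀ {M : Type} [AddCommMonoid M] (F : G → M) (a₀ : ↥H₁) (b₀ : ↥H₂),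
      ∑ s ∈ (H₁ : Set G).toFinset, F (((a₀ : G) + (b₀ : G)) - s)
        = ∑ a : ↥H₁, F ((a : G) + (b₀ : G)) := by
    intro M _ F a₀ b₀
    rw [Finset.sum_subtype (p := fun x => x ∈ H₁) ((H₁ : Set G).toFinset) (fun x => by simp)
      (fun s => F (((a₀ : G) + (b₀ : G)) - s))]
    exact Fintype.sum_equiv (Equiv.subLeft a₀) _ _
      (fun s => by
        congr 1
        push_cast [Equiv.subLeft_apply]
        abel)
  have reindex₂ : ∀ {M : Type} [AddCommMonoid M] (F : G → M) (a₀ : ↥H₁) (b₀ : ↥H₂),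
      ∑ s ∈ (H₂ : Set G).toFinset, F (((a₀ : G) + (b₀ : G)) - s)
        = ∑ b : ↥H₂, F ((a₀ : G) + (b : G)) := by
    intro M _ F a₀ b₀
    rw [Finset.sum_subtype (p := fun x => x ∈ H₂) ((H₂ : Set G).toFinset) (fun x => by simp)
      (fun s => F (((a₀ : G) + (b₀ : G)) - s))]
    exact Fintype.sum_equiv (Equiv.subLeft b₀) _ _
      (fun s => by
        congr 1
        push_cast [Equiv.subLeft_apply]
        abel)
  -- Part 1
  have part1 : ∀ f : G → ℂ,
      (∀ t : G, ∑ s ∈ (H₁ : Set G).toFinset, f (t - s) = (n : ℂ)) →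
      (∀ t : G, ∑ s ∈ (H₂ : Set G).toFinset, f (t - s) = (m : ℂ)) →
      n + m - Nat.gcd n m ≤ ({t : G | f t ≠ 0}).ncard := by
    intro f h₁ h₂
    set M : ↥H₁ → ↥H₂ → ℂ := fun a b => f ((a : G) + (b : G)) with hM
    have hcol : ∀ b, ∑ a, M a b = (n : ℂ) := by
      intro b
      simp only [hM]
      rw [← reindex₁ f 0 b]
      exact h₁ _
    have hrow : ∀ a, ∑ b, M a b = (m : ℂ) := by
      intro a
      simp only [hM]
      rw [← reindex₂ f a 0]
      exact h₂ _
    have hmb := TilingAux.matrix_bound M n m hn' hm' hn0 hm0 hcol hrow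
    have hncard : ({t : G | f t ≠ 0}).ncard
        = (Finset.univ.filter (fun p : ↥H₁ × ↥H₂ => M p.1 p.2 ≠ 0)).card := by
      rw [Set.ncard_eq_toFinset_card']
      have h1 : ({t : G | f t ≠ 0}).toFinset = Finset.univ.filter (fun t : G => f t ≠ 0) := by
        ext t; simp
      rw [h1]
      apply Finset.card_equiv e.symm
      intro t
      simp only [Finset.mem_filter, Finset.mem_univ, true_and, hM]
      have h : (↑(e.symm t).1 : G) + ↑(e.symm t).2 = e (e.symm t) := (he_apply (e.symm t)).symm
      rw [h, e.apply_symm_apply]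
    omega
  refine ⟨part1, ?_⟩
  -- Part 2: the construction
  set i₁ : ↥H₁ ≃ Fin n := Fintype.equivFinOfCardEq hn' with hi₁
  set i₂ : ↥H₂ ≃ Fin m := Fintype.equivFinOfCardEq hm' with hi₂
  set f : G → ℝ := fun t =>
    ((TilingAux.NL n m (i₁ (e.symm t).1) (i₂ (e.symm t).2) : ℕ) : ℝ) with hf
  have hfval : ∀ (a : ↥H₁) (b : ↥H₂),
      f ((a : G) + (b : G)) = ((TilingAux.NL n m (i₁ a) (i₂ b) : ℕ) : ℝ) := by
    intro a b
    have h : ((a : G) + (b : G)) = e (a, b) := (he_apply (a, b)).symm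
    simp only [hf, h, e.symm_apply_apply]
  have hcond₁ : ∀ t : G, ∑ s ∈ (H₁ : Set G).toFinset, f (t - s) = (n : ℝ) := by
    intro t
    obtain ⟨p, rfl⟩ := e.surjective t
    rw [he_apply p, reindex₁ f p.1 p.2]
    have : ∑ a : ↥H₁, f ((a : G) + (p.2 : G))
        = ∑ a : ↥H₁, ((TilingAux.NL n m (i₁ a) (i₂ p.2) : ℕ) : ℝ) := by
      apply Finset.sum_congr rfl
      intro a _
      exact hfval a p.2
    rw [this]
    have h2 : ∑ a : ↥H₁, ((TilingAux.NL n m (i₁ a) (i₂ p.2) : ℕ) : ℝ)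
        = ∑ i : Fin n, ((TilingAux.NL n m i (i₂ p.2) : ℕ) : ℝ) :=
      Fintype.sum_equiv i₁ _ _ (fun a => rfl)
    rw [h2, ← Nat.cast_sum]
    norm_cast
    rw [Fin.sum_univ_eq_sum_range (fun i => TilingAux.NL n m i (i₂ p.2))]
    exact TilingAux.NL_col_sum hn0 hm0 (i₂ p.2).isLt
  have hcond₂ : ∀ t : G, ∑ s ∈ (H₂ : Set G).toFinset, f (t - s) = (m : ℝ) := by
    intro t
    obtain ⟨p, rfl⟩ := e.surjective t
    rw [he_apply p, reindex₂ f p.1 p.2]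
    have : ∑ b : ↥H₂, f ((p.1 : G) + (b : G))
        = ∑ b : ↥H₂, ((TilingAux.NL n m (i₁ p.1) (i₂ b) : ℕ) : ℝ) := by
      apply Finset.sum_congr rfl
      intro b _
      exact hfval p.1 b
    rw [this]
    have h2 : ∑ b : ↥H₂, ((TilingAux.NL n m (i₁ p.1) (i₂ b) : ℕ) : ℝ)
        = ∑ j : Fin m, ((TilingAux.NL n m (i₁ p.1) j : ℕ) : ℝ) :=
      Fintype.sum_equiv i₂ _ _ (fun b => rfl)
    rw [h2, ← Nat.cast_sum]
    norm_cast
    rw [Fin.sum_univ_eq_sum_range (fun j => TilingAux.NL n m (i₁ p.1) j)]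
    exact TilingAux.NL_row_sum hn0 hm0 (i₁ p.1).isLt
  refine ⟨f, fun t => by positivity, hcond₁, hcond₂, ?_⟩
  -- support size
  have hsupp_card : ({t : G | f t ≠ 0}).ncard
      = ((Finset.univ : Finset (Fin n × Fin m)).filter
        (fun p => TilingAux.NL n m p.1 p.2 ≠ 0)).card := by
    rw [Set.ncard_eq_toFinset_card']
    have h1 : ({t : G | f t ≠ 0}).toFinset = Finset.univ.filter (fun t : G => f t ≠ 0) := by
      ext t; simp
    rw [h1]
    apply Finset.card_equiv (e.symm.trans (i₁.prodCongr i₂))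
    intro t
    simp only [Finset.mem_filter, Finset.mem_univ, true_and, Equiv.trans_apply,
      Equiv.prodCongr_apply, hf]
    constructor
    · intro h
      intro hc
      apply h
      simp only [Prod.map_fst, Prod.map_snd] at hc ⊢
      rw [hc]
      simp
    · intro h hc
      apply h
      simp only [Prod.map_fst, Prod.map_snd]
      exact_mod_cast hc
  -- upper bound
  have hub := TilingAux.NL_supp hn0 hm0
  -- lower bound via part 1
  have hlb := part1 (fun t => ((f t : ℝ) : ℂ))
    (fun t => by
      rw [show ∑ s ∈ (H₁ : Set G).toFinset, ((f (t - s) : ℝ) : ℂ)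
          = ((∑ s ∈ (H₁ : Set G).toFinset, f (t - s) : ℝ) : ℂ) by push_cast; ring]
      rw [hcond₁ t]; push_cast; ring)
    (fun t => by
      rw [show ∑ s ∈ (H₂ : Set G).toFinset, ((f (t - s) : ℝ) : ℂ)
          = ((∑ s ∈ (H₂ : Set G).toFinset, f (t - s) : ℝ) : ℂ) by push_cast; ring]
      rw [hcond₂ t]; push_cast; ring)
  have hsets : {t : G | ((f t : ℝ) : ℂ) ≠ 0} = {t : G | f t ≠ 0} := by
    ext t; simp
  rw [hsets] at hlb
  omega
end
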